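/- arXiv:1306.1402 — 5 statements merged into one kernel-verified Lean document; each statement's English description precedes it below -/
import Mathlib

section
/- Let G be a finite undirected connected simple bipartite graph with vertex bipartition V₁, V₂ and n vertices, and let t be any integer with t ≥ 4·ln(n)/μ. Then for every pair of vertices u, v: if u and v lie in different parts of the bipartition, |(P^t)_{u,v} − π(v)·(1+(−1)^{t+1})| ≤ n^{−3}; and if u and v lie in the same part of the bipartition, |(P^t)_{u,v} − π(v)·(1+(−1)^{t})| ≤ n^{−3}. -/
/-!
`transP G` is similar to the symmetric matrix `S = D^{1/2} P D^{-1/2}`, so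
`(P^t)_{uv} = √(d_v / d_u) (S^t)_{uv}`. For a connected bipartite graph the eigenvalues `1` and
`-1` of `S` are simple, with eigenvectors `√d` and `σ √d`, where `σ = ±1` is the signing of the
bipartition; expanding `δ_v` along them, they contribute exactly `π(v) (1 + (-1)^t σ_u σ_v)`.
On the orthogonal complement of these two vectors every eigenvalue of `S` is an eigenvalue of `P`
of modulus `< 1`, hence at most `1 - μ`, so the remainder is at most
`√n (1 - μ)^t ≤ √n e^{-μ t} ≤ n^{-3}`.
-/

open Finset

/-- The random-walk transition matrix of a graph: `P u v = 1/deg(u)` if `u ~ v`, else `0`. -/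
noncomputable def transP {V : Type*} [Fintype V] [DecidableEq V] (G : SimpleGraph V)
    [DecidableRel G.Adj] : Matrix V V ℝ :=
  fun u v => if G.Adj u v then ((G.degree u : ℝ))⁻¹ else 0

/-- The stationary distribution `π(v) = deg(v) / (2|E|)`. -/
noncomputable def statPi {V : Type*} [Fintype V] [DecidableEq V] (G : SimpleGraph V)
    [DecidableRel G.Adj] (v : V) : ℝ :=
  (G.degree v : ℝ) / (2 * G.edgeFinset.card)

/-- The spectral gap parameter `μ = 1 - max{|λ| : λ eigenvalue of P, |λ| < 1}`. -/
noncomputable def specMu {V : Type*} [Fintype V] [DecidableEq V] (G : SimpleGraph V)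
    [DecidableRel G.Adj] : ℝ :=
  1 - sSup {r : ℝ | ∃ lam : ℝ,
      Module.End.HasEigenvalue (Matrix.mulVecLin (transP G)) lam ∧ |lam| < 1 ∧ r = |lam|}

open Matrix Module.End

theorem LinearMap.IsSymmetric.norm_apply_le_of_hasEigenvalue {𝕜 E : Type*} [RCLike 𝕜]
    [NormedAddCommGroup E] [InnerProductSpace 𝕜 E] [FiniteDimensional 𝕜 E]
    {T : E →ₗ[𝕜] E} (hT : T.IsSymmetric) {c : ℝ} (hc : 0 ≤ c)
    (hspec : ∀ μ, HasEigenvalue T μ → ‖μ‖ ≤ c) (x : E) : ‖T x‖ ≤ c * ‖x‖ := by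
  set b := hT.eigenvectorBasis rfl
  have hcoord (i) : inner 𝕜 (b i) (T x) = (hT.eigenvalues rfl i : 𝕜) * inner 𝕜 (b i) x := by
    rw [← hT, hT.apply_eigenvectorBasis, inner_smul_left, RCLike.conj_ofReal]
  have hsq : ‖T x‖ ^ 2 ≤ (c * ‖x‖) ^ 2 := by
    rw [← b.sum_sq_norm_inner_right, mul_pow, ← b.sum_sq_norm_inner_right, Finset.mul_sum]
    gcongr with i
    rw [hcoord, norm_mul, mul_pow]
    gcongr
    exact hspec _ (hT.hasEigenvalue_eigenvalues rfl i)
  exact le_of_pow_le_pow_left₀ two_ne_zero (by positivity) hsq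

theorem LinearMap.IsSymmetric.norm_pow_apply_le_of_mem_invariant {𝕜 E : Type*} [RCLike 𝕜]
    [NormedAddCommGroup E] [InnerProductSpace 𝕜 E] [FiniteDimensional 𝕜 E]
    {T : E →ₗ[𝕜] E} (hT : T.IsSymmetric) {K : Submodule 𝕜 E} (hK : ∀ x ∈ K, T x ∈ K)
    {c : ℝ} (hc : 0 ≤ c) (hspec : ∀ μ : 𝕜, ∀ x ∈ K, x ≠ 0 → T x = μ • x → ‖μ‖ ≤ c) (n : ℕ) :
    ∀ x ∈ K, ‖(T ^ n) x‖ ≤ c ^ n * ‖x‖ := by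
  have hstep (x : E) (hx : x ∈ K) : ‖T x‖ ≤ c * ‖x‖ := by
    refine (hT.restrict_invariant hK).norm_apply_le_of_hasEigenvalue hc ?_ ⟨x, hx⟩
    intro μ hμ
    obtain ⟨⟨y, hy⟩, hyμ, hy0⟩ := hμ.exists_hasEigenvector
    refine hspec μ y hy (by simpa using hy0) ?_
    simpa using congrArg Subtype.val (mem_eigenspace_iff.mp hyμ)
  induction n with
  | zero => simp
  | succ n ih =>
    intro x hx
    rw [pow_succ, Module.End.mul_apply, pow_succ, mul_assoc]
    exact (ih _ (hK x hx)).trans (by gcongr; exact hstep x hx)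

theorem Matrix.pow_mulVec_of_mulVec_eq_smul {n R : Type*} [Fintype n] [DecidableEq n]
    [CommSemiring R] {A : Matrix n n R} {w : n → R} {c : R} (h : A *ᵥ w = c • w) (t : ℕ) :
    A ^ t *ᵥ w = c ^ t • w := by
  induction t with
  | zero => simp
  | succ t ih => rw [pow_succ, ← mulVec_mulVec, h, mulVec_smul, ih, smul_smul, pow_succ']

theorem sqrt_mul_one_sub_pow_le {n μ : ℝ} (hn : 1 ≤ n) (hμ : 0 < μ) (hμ1 : μ ≤ 1) {t : ℕ}
    (ht : 4 * Real.log n / μ ≤ t) : √n * (1 - μ) ^ t ≤ n ^ (-3 : ℤ) := by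
  have hn0 : 0 < n := by linarith
  have hlog : 4 * Real.log n ≤ t * μ := (div_le_iff₀ hμ).1 ht
  have hdecay : (1 - μ) ^ t ≤ (n ^ 4)⁻¹ :=
    calc (1 - μ) ^ t ≤ Real.exp (-μ) ^ t := by
          gcongr
          linarith [Real.add_one_le_exp (-μ)]
      _ = Real.exp (-(t * μ)) := by rw [← Real.exp_nat_mul]; ring_nf
      _ ≤ Real.exp (-Real.log (n ^ 4)) := by
          rw [Real.log_pow, Real.exp_le_exp]; push_cast; linarith
      _ = (n ^ 4)⁻¹ := by rw [Real.exp_neg, Real.exp_log (by positivity)]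
  calc √n * (1 - μ) ^ t ≤ n * (n ^ 4)⁻¹ := by
        gcongr
        exact Real.sqrt_le_self_iff.2 (Or.inr hn)
    _ = n ^ (-3 : ℤ) := by field_simp

section

variable {V : Type*} [Fintype V] (G : SimpleGraph V) [DecidableRel G.Adj]

noncomputable def sqrtDegree (x : V) : ℝ := √(G.degree x)

/-- `D^{-1/2} A D^{-1/2}`, which is similar to `transP G = D^{-1} A`. -/
noncomputable def normAdj : Matrix V V ℝ :=
  fun x y => if G.Adj x y then (sqrtDegree G x * sqrtDegree G y)⁻¹ else 0

theorem sqrtDegree_mul_self (x : V) : sqrtDegree G x * sqrtDegree G x = G.degree x :=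
  Real.mul_self_sqrt (Nat.cast_nonneg _)

theorem sqrtDegree_pos {x : V} (hx : 0 < G.degree x) : 0 < sqrtDegree G x :=
  Real.sqrt_pos.2 (Nat.cast_pos.2 hx)

theorem normAdj_isSymm : (normAdj G).IsSymm :=
  IsSymm.ext fun x y => by simp only [normAdj, G.adj_comm y x, mul_comm]

theorem dotProduct_normAdj_mulVec (f g : V → ℝ) :
    f ⬝ᵥ (normAdj G *ᵥ g) = (normAdj G *ᵥ f) ⬝ᵥ g := by
  rw [dotProduct_mulVec, ← mulVec_transpose, (normAdj_isSymm G).eq]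

theorem normAdj_mulVec_mul_of_adj {σ : V → ℝ} (hσ : ∀ x y, G.Adj x y → σ y = -σ x)
    (f : V → ℝ) : normAdj G *ᵥ (σ * f) = -(σ * (normAdj G *ᵥ f)) := by
  funext x
  simp only [mulVec, dotProduct, Pi.mul_apply, Pi.neg_apply, mul_sum, ← sum_neg_distrib]
  refine sum_congr rfl fun y _ => ?_
  by_cases h : G.Adj x y
  · rw [hσ x y h]; ring
  · simp [normAdj, h]

theorem sqrtDegree_dotProduct_self_pos [Nonempty V] (hdeg : ∀ x, 0 < G.degree x) :
    0 < sqrtDegree G ⬝ᵥ sqrtDegree G :=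
  sum_pos (fun x _ => mul_self_pos.2 (sqrtDegree_pos G (hdeg x)).ne') univ_nonempty

theorem mul_sqrtDegree_dotProduct_self {σ : V → ℝ} (hσsq : ∀ x, σ x ^ 2 = 1) :
    (σ * sqrtDegree G) ⬝ᵥ (σ * sqrtDegree G) = sqrtDegree G ⬝ᵥ sqrtDegree G :=
  sum_congr rfl fun x _ => by
    simp only [Pi.mul_apply]; linear_combination sqrtDegree G x * sqrtDegree G x * hσsq x

variable [DecidableEq V]

theorem transP_mulVec_apply (g : V → ℝ) (x : V) :
    (transP G *ᵥ g) x = (G.degree x : ℝ)⁻¹ * ∑ y ∈ G.neighborFinset x, g y := by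
  simp only [mulVec, dotProduct, transP, ite_mul, zero_mul, ← Finset.sum_filter, Finset.mul_sum]
  congr 1
  ext y
  simp

theorem transP_mulVec_one_apply {x : V} (hx : 0 < G.degree x) : (transP G *ᵥ 1) x = 1 := by
  rw [transP_mulVec_apply]
  simp [inv_mul_cancel₀ (Nat.cast_ne_zero (R := ℝ) |>.2 hx.ne')]

theorem abs_le_one_of_transP_mulVec_eq_smul {g : V → ℝ} (hg : g ≠ 0) {lam : ℝ}
    (h : transP G *ᵥ g = lam • g) : |lam| ≤ 1 := by
  obtain ⟨x₀, hx₀⟩ := Function.ne_iff.1 hg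
  obtain ⟨x, -, hx⟩ := Finset.exists_max_image univ (fun y => |g y|) ⟨x₀, mem_univ x₀⟩
  have hgx : 0 < |g x| := (abs_pos.2 hx₀).trans_le (hx x₀ (mem_univ x₀))
  refine le_of_mul_le_mul_right ?_ hgx
  calc |lam| * |g x| = (G.degree x : ℝ)⁻¹ * |∑ y ∈ G.neighborFinset x, g y| := by
        rw [← abs_mul, ← smul_eq_mul, ← Pi.smul_apply, ← h, transP_mulVec_apply, abs_mul,
          abs_of_nonneg (by positivity)]
    _ ≤ (G.degree x : ℝ)⁻¹ * (G.degree x * |g x|) := by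
        gcongr
        refine (abs_sum_le_sum_abs _ _).trans ?_
        rw [← G.card_neighborFinset_eq_degree, ← nsmul_eq_mul]
        exact sum_le_card_nsmul _ _ _ fun y _ => hx y (mem_univ y)
    _ ≤ 1 * |g x| := by
        rw [← mul_assoc]
        gcongr
        exact inv_mul_le_one

theorem eq_of_transP_mulVec_eq_self (hconn : G.Connected) {g : V → ℝ} (h : transP G *ᵥ g = g)
    (x y : V) : g x = g y := by
  obtain ⟨a, -, ha⟩ := Finset.exists_max_image univ g ⟨x, mem_univ x⟩
  -- maximum principle: a neighbour below the maximum would pull the mean `g b` below it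
  have hstep {b c : V} (hbc : G.Adj b c) (hb : g b = g a) : g c = g a := by
    by_contra hne
    have hlt : ∑ z ∈ G.neighborFinset b, g z < ∑ z ∈ G.neighborFinset b, g a :=
      sum_lt_sum (fun z _ => ha z (mem_univ z))
        ⟨c, (G.mem_neighborFinset b c).2 hbc, lt_of_le_of_ne (ha c (mem_univ c)) hne⟩
    have hdeg : (0 : ℝ) < G.degree b := Nat.cast_pos.2 hbc.degree_pos_left
    rw [sum_const, G.card_neighborFinset_eq_degree, nsmul_eq_mul] at hlt
    have hmean := congrFun h b
    rw [transP_mulVec_apply, hb] at hmean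
    refine lt_irrefl (g a) ?_
    calc g a = (G.degree b : ℝ)⁻¹ * ∑ z ∈ G.neighborFinset b, g z := hmean.symm
      _ < (G.degree b : ℝ)⁻¹ * (G.degree b * g a) := by gcongr
      _ = g a := by field_simp
  have hreach (z : V) : g z = g a := by
    induction (SimpleGraph.reachable_iff_reflTransGen a z).1 (hconn a z) with
    | refl => rfl
    | tail _ hadj ih => exact hstep hadj ih
  rw [hreach x, hreach y]

theorem abs_le_one_sub_specMu {lam : ℝ} (h : HasEigenvalue (mulVecLin (transP G)) lam)
    (h1 : |lam| < 1) : |lam| ≤ 1 - specMu G := by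
  rw [specMu, sub_sub_cancel]
  exact le_csSup ⟨1, by rintro _ ⟨l, -, hl, rfl⟩; exact hl.le⟩ ⟨lam, h, h1, rfl⟩

theorem specMu_le_one : specMu G ≤ 1 := by
  rw [specMu, sub_le_self_iff]
  exact Real.sSup_nonneg fun _ ⟨l, _, _, hr⟩ => hr ▸ abs_nonneg l

theorem specMu_pos : 0 < specMu G := by
  set S := {r : ℝ | ∃ lam : ℝ, HasEigenvalue (mulVecLin (transP G)) lam ∧ |lam| < 1 ∧ r = |lam|}
  have hfin : S.Finite := by
    refine ((finite_spectrum (mulVecLin (transP G))).image abs).subset ?_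
    rintro _ ⟨lam, hlam, -, rfl⟩
    exact ⟨lam, hlam.mem_spectrum, rfl⟩
  rw [specMu, sub_pos]
  obtain hS | hS := S.eq_empty_or_nonempty
  · simp [S, hS]
  · obtain ⟨lam, -, h1, hr⟩ := hS.csSup_mem hfin
    exact hr ▸ h1

theorem semiconjBy_diagonal_sqrtDegree :
    SemiconjBy (diagonal (sqrtDegree G)) (transP G) (normAdj G) := by
  ext x y
  rw [diagonal_mul, mul_diagonal, transP, normAdj]
  split_ifs with h
  · have hy := (sqrtDegree_pos G h.degree_pos_right).ne'
    rw [← sqrtDegree_mul_self G x]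
    field_simp
  · simp

theorem sqrtDegree_mul_transP_pow_apply (t : ℕ) (x y : V) :
    sqrtDegree G x * (transP G ^ t) x y = (normAdj G ^ t) x y * sqrtDegree G y := by
  simpa [diagonal_mul, mul_diagonal] using
    congrFun (congrFun ((semiconjBy_diagonal_sqrtDegree G).pow_right t).eq x) y

theorem sqrtDegree_mul_transP_mulVec (g : V → ℝ) (x : V) :
    sqrtDegree G x * (transP G *ᵥ g) x = (normAdj G *ᵥ (sqrtDegree G * g)) x := by
  have h := congrFun (congrArg (· *ᵥ g) (semiconjBy_diagonal_sqrtDegree G).eq) x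
  have hs : diagonal (sqrtDegree G) *ᵥ g = sqrtDegree G * g := funext (mulVec_diagonal _ _)
  simpa only [← mulVec_mulVec, mulVec_diagonal, hs] using h

theorem statPi_eq_sqrtDegree (v : V) :
    statPi G v = sqrtDegree G v ^ 2 / (sqrtDegree G ⬝ᵥ sqrtDegree G) := by
  have h : (2 * #G.edgeFinset : ℝ) = ∑ x, (G.degree x : ℝ) := by
    exact_mod_cast G.sum_degrees_eq_twice_card_edges.symm
  simp only [statPi, dotProduct, sq, sqrtDegree_mul_self, h]

theorem normAdj_mulVec_sqrtDegree (hdeg : ∀ x, 0 < G.degree x) :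
    normAdj G *ᵥ sqrtDegree G = sqrtDegree G := by
  funext x
  simpa [transP_mulVec_one_apply G (hdeg x)] using (sqrtDegree_mul_transP_mulVec G 1 x).symm

theorem normAdj_mulVec_mul_sqrtDegree (hdeg : ∀ x, 0 < G.degree x) {σ : V → ℝ}
    (hσ : ∀ x y, G.Adj x y → σ y = -σ x) :
    normAdj G *ᵥ (σ * sqrtDegree G) = -(σ * sqrtDegree G) := by
  rw [normAdj_mulVec_mul_of_adj G hσ, normAdj_mulVec_sqrtDegree G hdeg]

theorem transP_mulVec_div_sqrtDegree (hdeg : ∀ x, 0 < G.degree x) {f : V → ℝ} {lam : ℝ}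
    (h : normAdj G *ᵥ f = lam • f) :
    transP G *ᵥ (f / sqrtDegree G) = lam • (f / sqrtDegree G) := by
  funext x
  have hf : sqrtDegree G * (f / sqrtDegree G) = f :=
    funext fun y => mul_div_cancel₀ _ (sqrtDegree_pos G (hdeg y)).ne'
  have hx := sqrtDegree_mul_transP_mulVec G (f / sqrtDegree G) x
  rw [hf, h] at hx
  rw [Pi.smul_apply, smul_eq_mul, Pi.div_apply, mul_div_assoc',
    eq_div_iff (sqrtDegree_pos G (hdeg x)).ne', mul_comm]
  simpa using hx

theorem exists_eq_smul_sqrtDegree_of_normAdj_mulVec_eq_self (hconn : G.Connected)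
    (hdeg : ∀ x, 0 < G.degree x) {f : V → ℝ} (h : normAdj G *ᵥ f = f) :
    ∃ c : ℝ, f = c • sqrtDegree G := by
  have hP := transP_mulVec_div_sqrtDegree G hdeg (lam := 1) (by rwa [one_smul])
  rw [one_smul] at hP
  obtain ⟨x₀⟩ := hconn.nonempty
  refine ⟨(f / sqrtDegree G) x₀, funext fun x => ?_⟩
  rw [Pi.smul_apply, smul_eq_mul, ← eq_of_transP_mulVec_eq_self G hconn hP x x₀, Pi.div_apply,
    div_mul_cancel₀ _ (sqrtDegree_pos G (hdeg x)).ne']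

theorem eq_zero_of_normAdj_mulVec_eq_self (hconn : G.Connected) (hdeg : ∀ x, 0 < G.degree x)
    {f : V → ℝ} (h : normAdj G *ᵥ f = f) (hf : sqrtDegree G ⬝ᵥ f = 0) : f = 0 := by
  obtain ⟨c, rfl⟩ := exists_eq_smul_sqrtDegree_of_normAdj_mulVec_eq_self G hconn hdeg h
  have := hconn.nonempty
  rw [dotProduct_smul, smul_eq_mul, mul_eq_zero] at hf
  rw [hf.resolve_right (sqrtDegree_dotProduct_self_pos G hdeg).ne', zero_smul]

theorem abs_le_one_sub_specMu_of_normAdj_mulVec (hconn : G.Connected)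
    (hdeg : ∀ x, 0 < G.degree x) {σ : V → ℝ} (hσsq : ∀ x, σ x ^ 2 = 1)
    (hσ : ∀ x y, G.Adj x y → σ y = -σ x) {f : V → ℝ} (hf0 : f ≠ 0) {lam : ℝ}
    (h : normAdj G *ᵥ f = lam • f) (h₁ : sqrtDegree G ⬝ᵥ f = 0)
    (h₂ : (σ * sqrtDegree G) ⬝ᵥ f = 0) : |lam| ≤ 1 - specMu G := by
  have hP := transP_mulVec_div_sqrtDegree G hdeg h
  have hg0 : f / sqrtDegree G ≠ 0 := fun h0 => hf0 <| funext fun x => by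
    simpa [(sqrtDegree_pos G (hdeg x)).ne'] using congrFun h0 x
  refine abs_le_one_sub_specMu G (hasEigenvalue_of_hasEigenvector ⟨mem_eigenspace_iff.2 hP, hg0⟩) ?_
  refine (abs_le_one_of_transP_mulVec_eq_smul G hg0 hP).lt_of_ne fun habs => ?_
  rcases eq_or_eq_neg_of_abs_eq habs with rfl | rfl
  · exact hf0 (eq_zero_of_normAdj_mulVec_eq_self G hconn hdeg (by rwa [one_smul] at h) h₁)
  · -- multiplying by the signing `σ` turns a `-1`-eigenvector into a `1`-eigenvector
    have hσf : normAdj G *ᵥ (σ * f) = σ * f := by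
      rw [normAdj_mulVec_mul_of_adj G hσ, h, neg_one_smul, mul_neg, neg_neg]
    have h0 := eq_zero_of_normAdj_mulVec_eq_self G hconn hdeg hσf <| by
      rw [← h₂]; simp only [dotProduct, Pi.mul_apply, mul_assoc, mul_left_comm]
    refine hf0 (funext fun x => ?_)
    have hσx : σ x ≠ 0 := fun h0 => by simpa [h0] using hσsq x
    simpa [hσx] using congrFun h0 x

open WithLp in
theorem norm_normAdj_pow_mulVec_le (hconn : G.Connected) (hdeg : ∀ x, 0 < G.degree x)
    {σ : V → ℝ} (hσsq : ∀ x, σ x ^ 2 = 1) (hσ : ∀ x y, G.Adj x y → σ y = -σ x)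
    {r : V → ℝ} (h₁ : sqrtDegree G ⬝ᵥ r = 0) (h₂ : (σ * sqrtDegree G) ⬝ᵥ r = 0) (t : ℕ) :
    ‖toLp 2 (normAdj G ^ t *ᵥ r)‖ ≤ (1 - specMu G) ^ t * ‖toLp 2 r‖ := by
  set K : Submodule ℝ (EuclideanSpace ℝ V) :=
    (ℝ ∙ toLp 2 (sqrtDegree G))ᗮ ⊓ (ℝ ∙ toLp 2 (σ * sqrtDegree G))ᗮ
  have hK (x : EuclideanSpace ℝ V) :
      x ∈ K ↔ sqrtDegree G ⬝ᵥ ofLp x = 0 ∧ (σ * sqrtDegree G) ⬝ᵥ ofLp x = 0 := by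
    simp [K, Submodule.mem_orthogonal_singleton_iff_inner_right,
      EuclideanSpace.inner_eq_star_dotProduct, dotProduct_comm]
  have hKinv : ∀ x ∈ K, toEuclideanLin (normAdj G) x ∈ K := by
    intro x hx
    rw [hK] at hx ⊢
    simp only [toLpLin_apply, ofLp_toLp, dotProduct_normAdj_mulVec,
      normAdj_mulVec_sqrtDegree G hdeg, normAdj_mulVec_mul_sqrtDegree G hdeg hσ,
      neg_dotProduct, hx, neg_zero, and_self]
  have := (isSymmetric_toEuclideanLin_iff.2 (isHermitian_iff_isSymm.2 (normAdj_isSymm G)))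
    |>.norm_pow_apply_le_of_mem_invariant hKinv (sub_nonneg.2 (specMu_le_one G)) ?_ t
      (toLp 2 r) ((hK _).2 ⟨h₁, h₂⟩)
  · simpa [← toLpLin_pow, toLpLin_apply] using this
  intro μ x hx hx0 hTx
  exact abs_le_one_sub_specMu_of_normAdj_mulVec G hconn hdeg hσsq hσ
    (by simpa using hx0) (congrArg ofLp hTx) ((hK x).1 hx).1 ((hK x).1 hx).2

theorem sqrtDegree_dotProduct_mul_sqrtDegree (hdeg : ∀ x, 0 < G.degree x) {σ : V → ℝ}
    (hσ : ∀ x y, G.Adj x y → σ y = -σ x) : sqrtDegree G ⬝ᵥ (σ * sqrtDegree G) = 0 := by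
  have h := dotProduct_normAdj_mulVec G (sqrtDegree G) (σ * sqrtDegree G)
  rw [normAdj_mulVec_mul_sqrtDegree G hdeg hσ, normAdj_mulVec_sqrtDegree G hdeg,
    dotProduct_neg] at h
  linarith

/-- The component of `δ_v` orthogonal to the eigenvectors `√d` and `σ √d` of `normAdj G`. -/
noncomputable def deltaPerp (σ : V → ℝ) (v : V) : V → ℝ :=
  Pi.single v 1 - (sqrtDegree G v / (sqrtDegree G ⬝ᵥ sqrtDegree G)) • sqrtDegree G
    - (σ v * sqrtDegree G v / (sqrtDegree G ⬝ᵥ sqrtDegree G)) • (σ * sqrtDegree G)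

theorem sqrtDegree_dotProduct_deltaPerp (hdeg : ∀ x, 0 < G.degree x) {σ : V → ℝ}
    (hσ : ∀ x y, G.Adj x y → σ y = -σ x) (v : V) : sqrtDegree G ⬝ᵥ deltaPerp G σ v = 0 := by
  have : Nonempty V := ⟨v⟩
  have hN := (sqrtDegree_dotProduct_self_pos G hdeg).ne'
  simp only [deltaPerp, dotProduct_sub, dotProduct_smul, dotProduct_single_one, smul_eq_mul,
    sqrtDegree_dotProduct_mul_sqrtDegree G hdeg hσ]
  field_simp
  ring

theorem mul_sqrtDegree_dotProduct_deltaPerp (hdeg : ∀ x, 0 < G.degree x) {σ : V → ℝ}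
    (hσsq : ∀ x, σ x ^ 2 = 1) (hσ : ∀ x y, G.Adj x y → σ y = -σ x) (v : V) :
    (σ * sqrtDegree G) ⬝ᵥ deltaPerp G σ v = 0 := by
  have : Nonempty V := ⟨v⟩
  have hN := (sqrtDegree_dotProduct_self_pos G hdeg).ne'
  simp only [deltaPerp, dotProduct_sub, dotProduct_smul, dotProduct_single_one, smul_eq_mul,
    mul_sqrtDegree_dotProduct_self G hσsq, dotProduct_comm (σ * sqrtDegree G) (sqrtDegree G),
    sqrtDegree_dotProduct_mul_sqrtDegree G hdeg hσ, Pi.mul_apply]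
  field_simp
  ring

open WithLp in
theorem norm_toLp_deltaPerp_le_one (hdeg : ∀ x, 0 < G.degree x) {σ : V → ℝ}
    (hσsq : ∀ x, σ x ^ 2 = 1) (hσ : ∀ x y, G.Adj x y → σ y = -σ x) (v : V) :
    ‖toLp 2 (deltaPerp G σ v)‖ ≤ 1 := by
  set N := sqrtDegree G ⬝ᵥ sqrtDegree G
  set p : V → ℝ :=
    (sqrtDegree G v / N) • sqrtDegree G + (σ v * sqrtDegree G v / N) • (σ * sqrtDegree G)
  have hsum : deltaPerp G σ v + p = Pi.single v 1 := by simp only [deltaPerp, p]; abel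
  have hp : inner ℝ (toLp 2 (deltaPerp G σ v)) (toLp 2 p) = 0 := by
    rw [EuclideanSpace.inner_toLp_toLp, star_trivial]
    simp only [p, add_dotProduct, smul_dotProduct, sqrtDegree_dotProduct_deltaPerp G hdeg hσ,
      mul_sqrtDegree_dotProduct_deltaPerp G hdeg hσsq hσ, smul_zero, add_zero]
  have hpyth := norm_add_sq_eq_norm_sq_add_norm_sq_real hp
  rw [← toLp_add, hsum, PiLp.toLp_single, PiLp.norm_single, norm_one] at hpyth
  nlinarith [norm_nonneg (toLp 2 (deltaPerp G σ v)), mul_self_nonneg ‖toLp 2 p‖]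

theorem normAdj_pow_apply_eq (hdeg : ∀ x, 0 < G.degree x) {σ : V → ℝ}
    (hσ : ∀ x y, G.Adj x y → σ y = -σ x) (t : ℕ) (u v : V) :
    (normAdj G ^ t) u v = sqrtDegree G u * sqrtDegree G v / (sqrtDegree G ⬝ᵥ sqrtDegree G) *
      (1 + (-1) ^ t * (σ u * σ v)) + (normAdj G ^ t *ᵥ deltaPerp G σ v) u := by
  set N := sqrtDegree G ⬝ᵥ sqrtDegree G
  have hs : normAdj G *ᵥ sqrtDegree G = (1 : ℝ) • sqrtDegree G := by
    rw [one_smul, normAdj_mulVec_sqrtDegree G hdeg]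
  have hσs : normAdj G *ᵥ (σ * sqrtDegree G) = (-1 : ℝ) • (σ * sqrtDegree G) := by
    rw [normAdj_mulVec_mul_sqrtDegree G hdeg hσ, neg_one_smul]
  have hδ : Pi.single v 1 = (sqrtDegree G v / N) • sqrtDegree G
      + (σ v * sqrtDegree G v / N) • (σ * sqrtDegree G) + deltaPerp G σ v := by
    simp only [deltaPerp, N]; abel
  have h := congrFun (congrArg (normAdj G ^ t *ᵥ ·) hδ) u
  simp only [mulVec_single_one, mulVec_add, mulVec_smul, pow_mulVec_of_mulVec_eq_smul hs,
    pow_mulVec_of_mulVec_eq_smul hσs, one_pow, one_smul, col_apply, Pi.add_apply,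
    Pi.smul_apply, Pi.mul_apply, smul_eq_mul] at h
  rw [h]
  ring

theorem abs_transP_pow_apply_sub_le (hconn : G.Connected) (hdeg : ∀ x, 0 < G.degree x)
    {σ : V → ℝ} (hσsq : ∀ x, σ x ^ 2 = 1) (hσ : ∀ x y, G.Adj x y → σ y = -σ x) (t : ℕ)
    (u v : V) :
    |(transP G ^ t) u v - statPi G v * (1 + (-1) ^ t * (σ u * σ v))| ≤
      sqrtDegree G v / sqrtDegree G u * (1 - specMu G) ^ t := by
  have hsu := sqrtDegree_pos G (hdeg u)
  have hsv := sqrtDegree_pos G (hdeg v)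
  have hR : |(normAdj G ^ t *ᵥ deltaPerp G σ v) u| ≤ (1 - specMu G) ^ t :=
    calc _ ≤ _ := PiLp.norm_apply_le (WithLp.toLp 2 (normAdj G ^ t *ᵥ deltaPerp G σ v)) u
      _ ≤ (1 - specMu G) ^ t * ‖WithLp.toLp 2 (deltaPerp G σ v)‖ :=
          norm_normAdj_pow_mulVec_le G hconn hdeg hσsq hσ
            (sqrtDegree_dotProduct_deltaPerp G hdeg hσ v)
            (mul_sqrtDegree_dotProduct_deltaPerp G hdeg hσsq hσ v) t
      _ ≤ (1 - specMu G) ^ t := mul_le_of_le_one_right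
          (pow_nonneg (sub_nonneg.2 (specMu_le_one G)) t)
          (norm_toLp_deltaPerp_le_one G hdeg hσsq hσ v)
  have hP : (transP G ^ t) u v = (normAdj G ^ t) u v * sqrtDegree G v / sqrtDegree G u := by
    rw [eq_div_iff hsu.ne', mul_comm]
    exact sqrtDegree_mul_transP_pow_apply G t u v
  have key : (transP G ^ t) u v - statPi G v * (1 + (-1) ^ t * (σ u * σ v)) =
      sqrtDegree G v / sqrtDegree G u * (normAdj G ^ t *ᵥ deltaPerp G σ v) u := by
    rw [hP, normAdj_pow_apply_eq G hdeg hσ, statPi_eq_sqrtDegree]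
    field_simp
    ring
  rw [key, abs_mul, abs_of_pos (div_pos hsv hsu)]
  exact mul_le_mul_of_nonneg_left hR (div_pos hsv hsu).le

theorem abs_transP_pow_apply_sub_le_card_zpow [Nontrivial V] (hconn : G.Connected)
    {σ : V → ℝ} (hσsq : ∀ x, σ x ^ 2 = 1) (hσ : ∀ x y, G.Adj x y → σ y = -σ x) {t : ℕ}
    (ht : 4 * Real.log (Fintype.card V) / specMu G ≤ t) (u v : V) :
    |(transP G ^ t) u v - statPi G v * (1 + (-1) ^ t * (σ u * σ v))| ≤
      (Fintype.card V : ℝ) ^ (-3 : ℤ) := by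
  have hdeg (x : V) : 0 < G.degree x := hconn.preconnected.degree_pos_of_nontrivial x
  have hratio : sqrtDegree G v / sqrtDegree G u ≤ √(Fintype.card V) := by
    rw [div_le_iff₀ (sqrtDegree_pos G (hdeg u))]
    calc sqrtDegree G v ≤ √(Fintype.card V) :=
          Real.sqrt_le_sqrt (by exact_mod_cast (G.degree_lt_card_verts v).le)
      _ ≤ √(Fintype.card V) * sqrtDegree G u :=
          le_mul_of_one_le_right (Real.sqrt_nonneg _)
            (Real.one_le_sqrt.2 (by exact_mod_cast hdeg u))
  refine (abs_transP_pow_apply_sub_le G hconn hdeg hσsq hσ t u v).trans ?_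
  refine le_trans ?_ (sqrt_mul_one_sub_pow_le (by exact_mod_cast Fintype.card_pos)
    (specMu_pos G) (specMu_le_one G) ht)
  exact mul_le_mul_of_nonneg_right hratio (pow_nonneg (sub_nonneg.2 (specMu_le_one G)) t)

theorem abs_transP_pow_apply_sub_le_one [Subsingleton V] (t : ℕ) (u v : V) (a : ℝ) :
    |(transP G ^ t) u v - statPi G v * a| ≤ 1 := by
  have hnadj (x y : V) : ¬G.Adj x y := fun h => G.ne_of_adj h (Subsingleton.elim x y)
  have hdeg : G.degree v = 0 := by simp
  rw [statPi, hdeg, Nat.cast_zero, zero_div, zero_mul, sub_zero]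
  cases t with
  | zero => simp [Subsingleton.elim u v]
  | succ t =>
    have hP : transP G = 0 := by ext x y; simp [transP, hnadj]
    simp [hP, zero_pow t.succ_ne_zero]

end

theorem mixing_bipartite {V : Type*} [Fintype V] [DecidableEq V]
    (G : SimpleGraph V) [DecidableRel G.Adj]
    (hconn : G.Connected)
    (V₁ V₂ : Set V)
    (hpart : ∀ w : V, (w ∈ V₁ ↔ w ∉ V₂))
    (hbip : ∀ u v : V, G.Adj u v → ((u ∈ V₁ ∧ v ∈ V₂) ∨ (u ∈ V₂ ∧ v ∈ V₁)))
    (t : ℕ) (ht : 4 * Real.log (Fintype.card V) / specMu G ≤ (t : ℝ))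
    (u v : V) :
    (((u ∈ V₁ ∧ v ∈ V₂) ∨ (u ∈ V₂ ∧ v ∈ V₁)) →
      |(transP G ^ t) u v - statPi G v * (1 + (-1 : ℝ) ^ (t + 1))| ≤
        (Fintype.card V : ℝ) ^ (-3 : ℤ)) ∧
    (((u ∈ V₁ ∧ v ∈ V₁) ∨ (u ∈ V₂ ∧ v ∈ V₂)) →
      |(transP G ^ t) u v - statPi G v * (1 + (-1 : ℝ) ^ t)| ≤
        (Fintype.card V : ℝ) ^ (-3 : ℤ)) := by
  classical
  rcases subsingleton_or_nontrivial V with hV | hV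
  · have hcard : Fintype.card V = 1 :=
      le_antisymm (Fintype.card_le_one_iff_subsingleton.2 hV) (Fintype.card_pos_iff.2 ⟨u⟩)
    have hle (a : ℝ) := abs_transP_pow_apply_sub_le_one G t u v a
    simp only [hcard, Nat.cast_one, _root_.one_zpow]
    exact ⟨fun _ => hle _, fun _ => hle _⟩
  set σ : V → ℝ := fun x => if x ∈ V₁ then 1 else -1
  have hσ₁ (x : V) (hx : x ∈ V₁) : σ x = 1 := if_pos hx
  have hσ₂ (x : V) (hx : x ∈ V₂) : σ x = -1 := if_neg fun h => (hpart x).1 h hx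
  have hσsq (x : V) : σ x ^ 2 = 1 := by unfold σ; split_ifs <;> norm_num
  have hσ (x y : V) (hxy : G.Adj x y) : σ y = -σ x := by
    rcases hbip x y hxy with ⟨hx, hy⟩ | ⟨hx, hy⟩
    · rw [hσ₁ x hx, hσ₂ y hy]
    · rw [hσ₂ x hx, hσ₁ y hy, neg_neg]
  have hmix := abs_transP_pow_apply_sub_le_card_zpow G hconn hσsq hσ ht u v
  constructor
  · rintro (⟨hu, hv⟩ | ⟨hu, hv⟩)
    · simpa [hσ₁ u hu, hσ₂ v hv, pow_succ] using hmix
    · simpa [hσ₂ u hu, hσ₁ v hv, pow_succ] using hmix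
  · rintro (⟨hu, hv⟩ | ⟨hu, hv⟩)
    · simpa [hσ₁ u hu, hσ₁ v hv] using hmix
    · simpa [hσ₂ u hu, hσ₂ v hv] using hmix
end

section
/- Let G be a finite undirected connected simple non-bipartite graph with n vertices. Then for every integer t ≥ 0 and all vertices u, v, |(P^t)_{u,v} − π(v)| ≤ (1−μ)^t · sqrt(deg(v)/deg(u)). -/
open Finset

/-- A graph is bipartite if its vertices can be split into a set `S` such that every
edge goes between `S` and its complement. -/
def IsBipartition {V : Type*} (G : SimpleGraph V) (S : Set V) : Prop :=
  ∀ u v : V, G.Adj u v → ((u ∈ S ∧ v ∉ S) ∨ (u ∉ S ∧ v ∈ S))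

/-!
Conjugating by `D^{1/2}` turns `P` into the symmetric matrix `M = D^{-1/2} A D^{-1/2}`, and
`P^t(u,v) - π(v) = √(deg v / deg u) · (M^t - φ φᵀ)(u,v)`, where `φ = √π` is a unit eigenvector
of `M` for the eigenvalue `1`. For `t ≥ 1`, `M^t - φ φᵀ = (M - φ φᵀ)^t`. A nonzero eigenvalue `λ`
of the symmetric matrix `M - φ φᵀ` has an eigenvector `x ⊥ φ` with `M x = λ x`, so `D^{-1/2} x`
is an eigenvector of `P`. The maximum principle gives `|λ| ≤ 1`, and `|λ| = 1` forces
`D^{-1/2} x` to be multiplied by `λ` along every edge of the connected graph: `λ = 1` would make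
`x` a multiple of `φ`, and `λ = -1` would give a bipartition by sign. Hence `|λ| ≤ 1 - μ`, and the
spectral theorem bounds the entries of `(M - φ φᵀ)^t` by `(1 - μ)^t`.
-/

open Matrix

theorem sub_pow_succ_of_mul_eq {R : Type*} [Ring R] {m p : R} (hmp : m * p = p)
    (hpm : p * m = p) (hp : IsIdempotentElem p) (t : ℕ) :
    (m - p) ^ (t + 1) = m ^ (t + 1) - p := by
  have hpow : ∀ k : ℕ, m ^ k * p = p := by
    intro k
    induction k with
    | zero => rw [pow_zero, one_mul]
    | succ k ih => rw [pow_succ, mul_assoc, hmp, ih]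
  induction t with
  | zero => rw [zero_add, pow_one, pow_one]
  | succ t ih =>
    rw [pow_succ, ih, sub_mul, mul_sub, mul_sub, ← pow_succ, hpow, hpm, hp.eq]
    abel

theorem Matrix.IsHermitian.pow_apply_eq_sum {n : Type*} [Fintype n] [DecidableEq n]
    {A : Matrix n n ℝ} (hA : A.IsHermitian) (t : ℕ) (u v : n) :
    (A ^ t) u v =
      ∑ i, hA.eigenvalues i ^ t * hA.eigenvectorBasis i u * hA.eigenvectorBasis i v := by
  conv_lhs =>
    rw [hA.spectral_theorem, ← map_pow, diagonal_pow, Unitary.conjStarAlgAut_apply, mul_apply]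
  simp [mul_diagonal, mul_comm]

theorem Matrix.IsHermitian.sum_eigenvectorBasis_sq {n : Type*} [Fintype n] [DecidableEq n]
    {A : Matrix n n ℝ} (hA : A.IsHermitian) (u : n) :
    ∑ i, hA.eigenvectorBasis i u ^ 2 = 1 := by
  have h := congrFun₂ (mem_unitaryGroup_iff.mp hA.eigenvectorUnitary.2) u u
  simpa [mul_apply, sq] using h

theorem Matrix.IsHermitian.abs_pow_apply_le {n : Type*} [Fintype n] [DecidableEq n]
    {A : Matrix n n ℝ} (hA : A.IsHermitian) {b : ℝ} (hb : ∀ i, |hA.eigenvalues i| ≤ b)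
    (t : ℕ) (u v : n) : |(A ^ t) u v| ≤ b ^ t := by
  have hbt : 0 ≤ b ^ t := pow_nonneg ((abs_nonneg _).trans (hb u)) t
  set e := fun i => hA.eigenvectorBasis i
  rw [hA.pow_apply_eq_sum]
  calc |∑ i, hA.eigenvalues i ^ t * e i u * e i v|
      ≤ ∑ i, b ^ t * ((e i u ^ 2 + e i v ^ 2) / 2) := by
        refine (abs_sum_le_sum_abs _ _).trans (sum_le_sum fun i _ => ?_)
        rw [mul_assoc, abs_mul, abs_pow]
        gcongr
        · exact hb i
        · rw [abs_le]
          constructor <;> nlinarith [sq_nonneg (e i u + e i v), sq_nonneg (e i u - e i v)]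
    _ = b ^ t := by
        rw [← mul_sum, ← sum_div, sum_add_distrib, hA.sum_eigenvectorBasis_sq,
          hA.sum_eigenvectorBasis_sq]
        ring

theorem eq_of_sum_eq_card_mul_of_abs_le {ι K : Type*} [Field K] [LinearOrder K]
    [IsStrictOrderedRing K] {s : Finset ι} {f : ι → K} {c : K}
    (hsum : ∑ i ∈ s, f i = #s * c) (hle : ∀ i ∈ s, |f i| ≤ |c|) : ∀ i ∈ s, f i = c := by
  have hmul_le : ∀ i ∈ s, f i * c ≤ c * c := fun i hi =>
    calc f i * c ≤ |f i| * |c| := (le_abs_self _).trans (abs_mul _ _).le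
      _ ≤ |c| * |c| := mul_le_mul_of_nonneg_right (hle i hi) (abs_nonneg c)
      _ = c * c := abs_mul_abs_self c
  have hsum_mul : ∑ i ∈ s, f i * c = ∑ i ∈ s, c * c := by
    rw [← sum_mul, hsum, sum_const, nsmul_eq_mul, mul_assoc]
  intro i hi
  have hi_mul := (sum_eq_sum_iff_of_le hmul_le).mp hsum_mul i hi
  rcases eq_or_ne c 0 with rfl | hc
  · exact abs_nonpos_iff.mp ((hle i hi).trans_eq abs_zero)
  · exact mul_right_cancel₀ hc hi_mul

theorem Matrix.dotProduct_eq_zero_of_mulVec_eq_smul {n R : Type*} [Fintype n] [CommRing R]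
    [IsDomain R] {Q : Matrix n n R} (hQ : Q.IsSymm) {φ x : n → R} (hφ : Q *ᵥ φ = 0) {μ : R}
    (hμ : μ ≠ 0) (hx : Q *ᵥ x = μ • x) : φ ⬝ᵥ x = 0 := by
  have h : μ * (φ ⬝ᵥ x) = 0 :=
    calc μ * (φ ⬝ᵥ x) = φ ⬝ᵥ (Q *ᵥ x) := by rw [hx, dotProduct_smul, smul_eq_mul]
      _ = (Qᵀ *ᵥ φ) ⬝ᵥ x := by rw [dotProduct_mulVec, mulVec_transpose]
      _ = 0 := by rw [hQ.eq, hφ, zero_dotProduct]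
  exact (mul_eq_zero.mp h).resolve_left hμ

theorem Matrix.abs_one_sub_vecMulVec_apply_le_one {n : Type*} [Fintype n] [DecidableEq n]
    {x : n → ℝ} (hx : x ⬝ᵥ x = 1) (u v : n) : |(1 - vecMulVec x x) u v| ≤ 1 := by
  have hsq : ∀ w, x w * x w ≤ 1 := fun w =>
    hx ▸ single_le_sum (f := fun w => x w * x w) (fun i _ => mul_self_nonneg _) (mem_univ w)
  rw [sub_apply, vecMulVec_apply]
  rcases eq_or_ne u v with rfl | huv
  · rw [one_apply_eq, abs_le]
    constructor <;> nlinarith [hsq u, mul_self_nonneg (x u)]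
  · rw [one_apply_ne huv, zero_sub, abs_neg, abs_mul]
    exact mul_le_one₀ (abs_le_one_iff_mul_self_le_one.mpr (hsq u)) (abs_nonneg _)
      (abs_le_one_iff_mul_self_le_one.mpr (hsq v))

namespace SimpleGraph

theorem Reachable.of_adj_imp {V : Type*} {G : SimpleGraph V} {p : V → Prop}
    (h : ∀ a b, G.Adj a b → p a → p b) {u v : V} (huv : G.Reachable u v) (hu : p u) : p v := by
  obtain ⟨w⟩ := huv
  induction w with
  | nil => exact hu
  | cons hab _ ih => exact ih (h _ _ hab hu)

theorem Connected.degree_pos_of_not_isBipartition {V : Type*} [Fintype V] {G : SimpleGraph V}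
    [DecidableRel G.Adj] (hconn : G.Connected) (hG : ¬ ∃ S : Set V, IsBipartition G S)
    (v : V) : 0 < G.degree v := by
  obtain ⟨a, b, hab⟩ : ∃ a b, G.Adj a b := by
    by_contra! h
    exact hG ⟨∅, fun a b hab => absurd hab (h a b)⟩
  have : Nontrivial V := ⟨⟨a, b, hab.ne⟩⟩
  exact hconn.preconnected.degree_pos_of_nontrivial v

variable {V : Type*} [Fintype V] {G : SimpleGraph V} [DecidableRel G.Adj]

variable (G) in
noncomputable def sqrtDeg (v : V) : ℝ := √(G.degree v)

variable (G) in
/-- The matrix `D^{-1/2} A D^{-1/2} = D^{1/2} P D^{-1/2}`. -/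
noncomputable def normalizedAdjMatrix : Matrix V V ℝ :=
  of fun u v => if G.Adj u v then (sqrtDeg G u * sqrtDeg G v)⁻¹ else 0

theorem sqrtDeg_pos {v : V} (hv : 0 < G.degree v) : 0 < sqrtDeg G v :=
  Real.sqrt_pos.mpr (by exact_mod_cast hv)

theorem sqrtDeg_mul_self (v : V) : sqrtDeg G v * sqrtDeg G v = G.degree v :=
  Real.mul_self_sqrt (Nat.cast_nonneg _)

theorem isSymm_normalizedAdjMatrix : (normalizedAdjMatrix G).IsSymm :=
  IsSymm.ext fun u v => by simp [normalizedAdjMatrix, G.adj_comm, mul_comm]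

variable (G) in
noncomputable def sqrtStatPi : V → ℝ := (√(2 * #G.edgeFinset : ℝ))⁻¹ • sqrtDeg G

theorem sqrtDeg_dotProduct_self : sqrtDeg G ⬝ᵥ sqrtDeg G = 2 * #G.edgeFinset := by
  simp only [dotProduct, sqrtDeg_mul_self]
  exact_mod_cast G.sum_degrees_eq_twice_card_edges

theorem two_mul_card_edgeFinset_pos [Nonempty V] (hd : ∀ v, 0 < G.degree v) :
    (0 : ℝ) < 2 * #G.edgeFinset := by
  rw [← sqrtDeg_dotProduct_self]
  exact sum_pos (fun v _ => mul_self_pos.mpr (sqrtDeg_pos (hd v)).ne') univ_nonempty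

theorem sqrtStatPi_dotProduct_self [Nonempty V] (hd : ∀ v, 0 < G.degree v) :
    sqrtStatPi G ⬝ᵥ sqrtStatPi G = 1 := by
  have hE := two_mul_card_edgeFinset_pos hd
  rw [sqrtStatPi, smul_dotProduct, dotProduct_smul, sqrtDeg_dotProduct_self, smul_eq_mul,
    smul_eq_mul, ← mul_assoc, ← mul_inv, Real.mul_self_sqrt hE.le, inv_mul_cancel₀ hE.ne']

variable [DecidableEq V]

theorem transP_mulVec_apply (z : V → ℝ) (a : V) :
    (transP G *ᵥ z) a = (G.degree a : ℝ)⁻¹ * ∑ w ∈ G.neighborFinset a, z w := by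
  simp [transP, mulVec, dotProduct, neighborFinset_eq_filter, sum_filter, mul_sum]

theorem sum_neighborFinset_eq_of_transP_mulVec {z : V → ℝ} {lam : ℝ}
    (hz : transP G *ᵥ z = lam • z) {a : V} (ha : 0 < G.degree a) :
    ∑ w ∈ G.neighborFinset a, z w = G.degree a * (lam * z a) := by
  have h := congrFun hz a
  rw [transP_mulVec_apply, Pi.smul_apply, smul_eq_mul] at h
  rw [← h, mul_inv_cancel_left₀ (by positivity)]

theorem abs_le_one_of_transP_mulVec_eq_smul (hd : ∀ v, 0 < G.degree v) {z : V → ℝ}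
    {lam : ℝ} (hz : transP G *ᵥ z = lam • z) (hz0 : z ≠ 0) : |lam| ≤ 1 := by
  obtain ⟨w, hw⟩ := Function.ne_iff.mp hz0
  have : Nonempty V := ⟨w⟩
  obtain ⟨a, ha⟩ := Finite.exists_max fun v => |z v|
  have hza : 0 < |z a| := (abs_pos.mpr hw).trans_le (ha w)
  have hda : (0 : ℝ) < G.degree a := by exact_mod_cast hd a
  have key : G.degree a * (|lam| * |z a|) ≤ G.degree a * |z a| :=
    calc G.degree a * (|lam| * |z a|) = |∑ w ∈ G.neighborFinset a, z w| := by
          rw [sum_neighborFinset_eq_of_transP_mulVec hz (hd a), abs_mul, abs_mul,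
            Nat.abs_cast]
      _ ≤ ∑ w ∈ G.neighborFinset a, |z w| := abs_sum_le_sum_abs _ _
      _ ≤ G.degree a * |z a| := by
          simpa using sum_le_card_nsmul (G.neighborFinset a) _ _ fun w _ => ha w
  have hlam : |lam| * |z a| ≤ 1 * |z a| := by rw [one_mul]; exact le_of_mul_le_mul_left key hda
  exact le_of_mul_le_mul_right hlam hza

theorem transP_eigenvector_apply_of_adj (hd : ∀ v, 0 < G.degree v) {z : V → ℝ} {lam : ℝ}
    (hz : transP G *ᵥ z = lam • z) (hlam : |lam| = 1) {a : V} (ha : ∀ w, |z w| ≤ |z a|)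
    {b : V} (hab : G.Adj a b) : z b = lam * z a := by
  refine eq_of_sum_eq_card_mul_of_abs_le ?_ (fun w _ => ?_) b (G.mem_neighborFinset a b |>.mpr hab)
  · rw [sum_neighborFinset_eq_of_transP_mulVec hz (hd a), card_neighborFinset_eq_degree]
  · rw [abs_mul, hlam, one_mul]; exact ha w

theorem transP_eigenvector_apply_of_adj_of_connected (hconn : G.Connected)
    (hd : ∀ v, 0 < G.degree v) {z : V → ℝ} {lam : ℝ} (hz : transP G *ᵥ z = lam • z)
    (hlam : |lam| = 1) {a b : V} (hab : G.Adj a b) : z b = lam * z a := by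
  have : Nonempty V := ⟨a⟩
  obtain ⟨a₀, ha₀⟩ := Finite.exists_max fun v => |z v|
  have hmax : ∀ v w, |z w| ≤ |z v| := fun v =>
    (hconn a₀ v).of_adj_imp (p := fun v => ∀ w, |z w| ≤ |z v|) (fun x y hxy hx w => by
      rw [transP_eigenvector_apply_of_adj hd hz hlam hx hxy, abs_mul, hlam, one_mul]
      exact hx w) ha₀
  exact transP_eigenvector_apply_of_adj hd hz hlam (hmax a) hab

theorem transP_eigenvector_one_apply_eq (hconn : G.Connected) (hd : ∀ v, 0 < G.degree v)
    {z : V → ℝ} (hz : transP G *ᵥ z = z) (u v : V) : z v = z u := by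
  have hz' : transP G *ᵥ z = (1 : ℝ) • z := by rwa [one_smul]
  exact (hconn u v).of_adj_imp (p := fun v => z v = z u) (fun a b hab ha => by
    rw [transP_eigenvector_apply_of_adj_of_connected hconn hd hz' abs_one hab, one_mul, ha]) rfl

theorem exists_isBipartition_of_transP_mulVec_eq_neg (hconn : G.Connected)
    (hd : ∀ v, 0 < G.degree v) {z : V → ℝ} (hz : transP G *ᵥ z = -z) (hz0 : z ≠ 0) :
    ∃ S : Set V, IsBipartition G S := by
  have hadj : ∀ a b, G.Adj a b → z b = -z a := fun a b hab => by
    rw [transP_eigenvector_apply_of_adj_of_connected hconn hd (z := z) (lam := -1)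
      (by rwa [neg_one_smul]) (by simp) hab, neg_one_mul]
  have habs : ∀ u v, |z v| = |z u| := fun u v =>
    (hconn u v).of_adj_imp (p := fun v => |z v| = |z u|)
      (fun a b hab ha => by rw [hadj a b hab, abs_neg, ha]) rfl
  obtain ⟨w, hw⟩ := Function.ne_iff.mp hz0
  have hne : ∀ a, z a ≠ 0 := fun a => abs_ne_zero.mp (habs w a ▸ abs_ne_zero.mpr hw)
  refine ⟨{v | 0 < z v}, fun a b hab => ?_⟩
  simp only [Set.mem_ofPred_eq, hadj a b hab, neg_pos, not_lt]
  rcases (hne a).lt_or_gt with h | h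
  · exact .inr ⟨h.le, h⟩
  · exact .inl ⟨h, h.le⟩

theorem semiconjBy_diagonal_sqrtDeg :
    SemiconjBy (diagonal (sqrtDeg G)) (transP G) (normalizedAdjMatrix G) := by
  ext u v
  simp only [diagonal_mul, mul_diagonal, transP, normalizedAdjMatrix, of_apply]
  split_ifs with hadj
  · have hu := sqrtDeg_pos (G.degree_pos_iff_exists_adj u |>.mpr ⟨v, hadj⟩)
    have hv := sqrtDeg_pos (G.degree_pos_iff_exists_adj v |>.mpr ⟨u, hadj.symm⟩)
    rw [← sqrtDeg_mul_self]
    field_simp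
  · simp

theorem sqrtDeg_mul_transP_pow_apply (t : ℕ) (u v : V) :
    sqrtDeg G u * (transP G ^ t) u v = (normalizedAdjMatrix G ^ t) u v * sqrtDeg G v := by
  have h := (semiconjBy_diagonal_sqrtDeg (G := G)).pow_right t
  simpa [diagonal_mul, mul_diagonal] using congrFun₂ h.eq u v

theorem transP_mulVec_one (hd : ∀ v, 0 < G.degree v) : transP G *ᵥ 1 = 1 := by
  ext a
  have hda : (G.degree a : ℝ) ≠ 0 := by exact_mod_cast (hd a).ne'
  simp [transP_mulVec_apply, hda]

theorem sqrtDeg_mul_transP_mulVec (z : V → ℝ) :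
    sqrtDeg G * (transP G *ᵥ z) = normalizedAdjMatrix G *ᵥ (sqrtDeg G * z) := by
  have hdiag : ∀ y : V → ℝ, diagonal (sqrtDeg G) *ᵥ y = sqrtDeg G * y := fun y => by
    ext a; exact mulVec_diagonal _ _ a
  rw [← hdiag, ← hdiag, mulVec_mulVec, mulVec_mulVec, (semiconjBy_diagonal_sqrtDeg (G := G)).eq]

theorem normalizedAdjMatrix_mulVec_sqrtDeg (hd : ∀ v, 0 < G.degree v) :
    normalizedAdjMatrix G *ᵥ sqrtDeg G = sqrtDeg G := by
  simpa [transP_mulVec_one hd] using (sqrtDeg_mul_transP_mulVec (G := G) 1).symm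

theorem transP_mulVec_div_sqrtDeg (hd : ∀ v, 0 < G.degree v) {x : V → ℝ} {lam : ℝ}
    (hx : normalizedAdjMatrix G *ᵥ x = lam • x) :
    transP G *ᵥ (x / sqrtDeg G) = lam • (x / sqrtDeg G) := by
  have hs : ∀ a, sqrtDeg G a ≠ 0 := fun a => (sqrtDeg_pos (hd a)).ne'
  have hx' : sqrtDeg G * (x / sqrtDeg G) = x := by ext a; exact mul_div_cancel₀ (x a) (hs a)
  have h := sqrtDeg_mul_transP_mulVec (G := G) (x / sqrtDeg G)
  rw [hx', hx] at h
  ext a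
  refine mul_left_cancel₀ (hs a) ((congrFun h a).trans ?_)
  simp only [Pi.smul_apply, Pi.div_apply, smul_eq_mul]
  field_simp [hs a]

theorem exists_eq_smul_sqrtDeg_of_mulVec_eq_self (hconn : G.Connected)
    (hd : ∀ v, 0 < G.degree v) {x : V → ℝ} (hx : normalizedAdjMatrix G *ᵥ x = x) :
    ∃ c : ℝ, x = c • sqrtDeg G := by
  obtain ⟨u⟩ := hconn.nonempty
  have hz := transP_mulVec_div_sqrtDeg hd (lam := 1) (by rwa [one_smul])
  rw [one_smul] at hz
  refine ⟨(x / sqrtDeg G) u, funext fun v => ?_⟩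
  rw [Pi.smul_apply, smul_eq_mul, ← transP_eigenvector_one_apply_eq hconn hd hz u v,
    Pi.div_apply, div_mul_cancel₀ _ (sqrtDeg_pos (hd v)).ne']

theorem normalizedAdjMatrix_mulVec_sqrtStatPi (hd : ∀ v, 0 < G.degree v) :
    normalizedAdjMatrix G *ᵥ sqrtStatPi G = sqrtStatPi G := by
  rw [sqrtStatPi, mulVec_smul, normalizedAdjMatrix_mulVec_sqrtDeg hd]

theorem sqrtStatPi_vecMul_normalizedAdjMatrix (hd : ∀ v, 0 < G.degree v) :
    sqrtStatPi G ᵥ* normalizedAdjMatrix G = sqrtStatPi G := by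
  rw [← mulVec_transpose, isSymm_normalizedAdjMatrix.eq, normalizedAdjMatrix_mulVec_sqrtStatPi hd]

theorem statPi_eq_mul_sqrtStatPi {u : V} (hu : 0 < G.degree u) (v : V) :
    statPi G v = sqrtDeg G v / sqrtDeg G u * (sqrtStatPi G u * sqrtStatPi G v) := by
  have hsu := (sqrtDeg_pos hu).ne'
  have hE : (0 : ℝ) ≤ 2 * #G.edgeFinset := by positivity
  simp only [statPi, sqrtStatPi, Pi.smul_apply, smul_eq_mul]
  rw [← sqrtDeg_mul_self v]
  field_simp
  rw [Real.sq_sqrt hE]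
  ring

theorem one_sub_specMu_nonneg : 0 ≤ 1 - specMu G := by
  rw [specMu, sub_sub_cancel]
  exact Real.sSup_nonneg (by rintro r ⟨lam, -, -, rfl⟩; exact abs_nonneg _)

theorem abs_le_one_sub_specMu {lam : ℝ}
    (hlam : Module.End.HasEigenvalue (mulVecLin (transP G)) lam) (hlt : |lam| < 1) :
    |lam| ≤ 1 - specMu G := by
  rw [specMu, sub_sub_cancel]
  exact le_csSup ⟨1, by rintro r ⟨lam, -, hlt, rfl⟩; exact hlt.le⟩ ⟨lam, hlam, hlt, rfl⟩

theorem abs_le_one_sub_specMu_of_mulVec_eq_smul (hconn : G.Connected)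
    (hG : ¬ ∃ S : Set V, IsBipartition G S) {x : V → ℝ} (hx0 : x ≠ 0) {lam : ℝ}
    (hx : (normalizedAdjMatrix G - vecMulVec (sqrtStatPi G) (sqrtStatPi G)) *ᵥ x = lam • x) :
    |lam| ≤ 1 - specMu G := by
  have hd := hconn.degree_pos_of_not_isBipartition hG
  have : Nonempty V := hconn.nonempty
  rcases eq_or_ne lam 0 with rfl | hlam
  · simpa using one_sub_specMu_nonneg
  set φ := sqrtStatPi G with hφ
  have hQ : (normalizedAdjMatrix G - vecMulVec φ φ).IsSymm :=
    isSymm_normalizedAdjMatrix.sub (transpose_vecMulVec φ φ)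
  have hQφ : (normalizedAdjMatrix G - vecMulVec φ φ) *ᵥ φ = 0 := by
    rw [sub_mulVec, vecMulVec_mulVec, sqrtStatPi_dotProduct_self hd,
      normalizedAdjMatrix_mulVec_sqrtStatPi hd, MulOpposite.op_one, one_smul, sub_self]
  have horth : φ ⬝ᵥ x = 0 := dotProduct_eq_zero_of_mulVec_eq_smul hQ hQφ hlam hx
  have hMx : normalizedAdjMatrix G *ᵥ x = lam • x := by
    rwa [sub_mulVec, vecMulVec_mulVec, horth, MulOpposite.op_zero, zero_smul, sub_zero] at hx
  have hz := transP_mulVec_div_sqrtDeg hd hMx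
  have hz0 : x / sqrtDeg G ≠ 0 := fun h => hx0 <| funext fun v => by
    simpa [(sqrtDeg_pos (hd v)).ne'] using congrFun h v
  have hlam_ne_one : lam ≠ 1 := by
    rintro rfl
    obtain ⟨c, rfl⟩ := exists_eq_smul_sqrtDeg_of_mulVec_eq_self hconn hd (by rwa [one_smul] at hMx)
    have hE := two_mul_card_edgeFinset_pos hd
    rw [dotProduct_smul, hφ, sqrtStatPi, smul_dotProduct, sqrtDeg_dotProduct_self, smul_eq_mul,
      smul_eq_mul] at horth
    have hc : c = 0 := (mul_eq_zero.mp horth).resolve_right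
      (mul_ne_zero (inv_ne_zero (Real.sqrt_pos.mpr hE).ne') hE.ne')
    exact hx0 (by rw [hc, zero_smul])
  have hlam_ne_neg_one : lam ≠ -1 := by
    rintro rfl
    exact hG <| exists_isBipartition_of_transP_mulVec_eq_neg hconn hd
      (by rwa [neg_one_smul] at hz) hz0
  have hlt : |lam| < 1 := (abs_le_one_of_transP_mulVec_eq_smul hd hz hz0).lt_of_ne fun h =>
    ((abs_eq zero_le_one).mp h).elim hlam_ne_one hlam_ne_neg_one
  exact abs_le_one_sub_specMu
    (Module.End.hasEigenvalue_of_hasEigenvector ⟨Module.End.mem_eigenspace_iff.mpr hz, hz0⟩) hlt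

theorem abs_normalizedAdjMatrix_pow_sub_apply_le (hconn : G.Connected)
    (hG : ¬ ∃ S : Set V, IsBipartition G S) (t : ℕ) (u v : V) :
    |(normalizedAdjMatrix G ^ t - vecMulVec (sqrtStatPi G) (sqrtStatPi G)) u v| ≤
      (1 - specMu G) ^ t := by
  have hd := hconn.degree_pos_of_not_isBipartition hG
  have : Nonempty V := ⟨u⟩
  set φ := sqrtStatPi G
  cases t with
  | zero => simpa using abs_one_sub_vecMulVec_apply_le_one (sqrtStatPi_dotProduct_self hd) u v
  | succ t =>
    have hQ : (normalizedAdjMatrix G - vecMulVec φ φ).IsHermitian :=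
      isHermitian_iff_isSymm.mpr (isSymm_normalizedAdjMatrix.sub (transpose_vecMulVec φ φ))
    rw [← sub_pow_succ_of_mul_eq
      (by rw [mul_vecMulVec, normalizedAdjMatrix_mulVec_sqrtStatPi hd])
      (by rw [vecMulVec_mul, sqrtStatPi_vecMul_normalizedAdjMatrix hd])
      (by rw [IsIdempotentElem, vecMulVec_mul_vecMulVec, sqrtStatPi_dotProduct_self hd, one_smul])]
    refine hQ.abs_pow_apply_le (fun i => ?_) _ u v
    refine abs_le_one_sub_specMu_of_mulVec_eq_smul hconn hG ?_ (hQ.mulVec_eigenvectorBasis i)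
    simpa using hQ.eigenvectorBasis.orthonormal.ne_zero i

theorem transP_pow_apply_sub_statPi {u : V} (hu : 0 < G.degree u) (t : ℕ) (v : V) :
    (transP G ^ t) u v - statPi G v = √(G.degree v / G.degree u) *
      (normalizedAdjMatrix G ^ t - vecMulVec (sqrtStatPi G) (sqrtStatPi G)) u v := by
  have hsu := (sqrtDeg_pos hu).ne'
  rw [Real.sqrt_div (Nat.cast_nonneg _)]
  change _ = sqrtDeg G v / sqrtDeg G u * _
  rw [statPi_eq_mul_sqrtStatPi hu, Matrix.sub_apply, vecMulVec_apply, mul_sub, sub_left_inj,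
    div_mul_eq_mul_div, eq_div_iff hsu, mul_comm, sqrtDeg_mul_transP_pow_apply, mul_comm]

end SimpleGraph

open SimpleGraph

theorem spectral_bound_nonbipartite {V : Type*} [Fintype V] [DecidableEq V]
    (G : SimpleGraph V) [DecidableRel G.Adj]
    (hconn : G.Connected)
    (hnonbip : ¬ ∃ S : Set V, IsBipartition G S)
    (t : ℕ) (u v : V) :
    |(transP G ^ t) u v - statPi G v| ≤
      (1 - specMu G) ^ t * Real.sqrt ((G.degree v : ℝ) / (G.degree u : ℝ)) := by
  rw [transP_pow_apply_sub_statPi (hconn.degree_pos_of_not_isBipartition hnonbip u), abs_mul,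
    abs_of_nonneg (Real.sqrt_nonneg _), mul_comm]
  exact mul_le_mul_of_nonneg_right (abs_normalizedAdjMatrix_pow_sub_apply_le hconn hnonbip t u v)
    (Real.sqrt_nonneg _)
end

section
/- Let (X_t)_{t∈ℕ} be a sequence of nonnegative, integrable real-valued random variables adapted to a filtration (ℱ_t) on a probability space, with X_0 equal to a constant x₀. Let 0 < γ < 1 and β > 0 with x₀ ≥ β, and suppose that for every t ≥ 1, almost surely on the event {X_{t−1} ≥ β} one has E[X_t | ℱ_{t−1}] ≤ (1−γ)·X_{t−1}. Define the stopping time τ := min{t ∈ ℕ : X_t ≤ β}. Then P( τ ≥ (1/γ)·(1 + ln(x₀/β)) ) ≤ 1/2. -/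
/-!
Let `E t` be the event that the process has stayed at or above `β` before time `t`. On
`E (t+1) ∈ ℱ t` the drift condition gives
`∫_{E (t+1)} X (t+1) = ∫_{E (t+1)} E[X (t+1) | ℱ t] ≤ (1-γ) ∫_{E t} X t`, hence
`∫_{E t} X t ≤ (1-γ)^t x₀`. Markov's inequality for `X T` on `E (T+1)`, where
`T + 1 = ⌈(1 + ln(x₀/β))/γ⌉`, bounds the probability in question by `(1-γ)^T x₀/β`,
and this is at most `1/2` by `1 - γ ≤ e^{-γ}` and `2(1 - γ) ≤ e^{1-2γ}`.
-/

open MeasureTheory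

namespace MeasureTheory

variable {Ω : Type*} {m0 : MeasurableSpace Ω}

def stayedAbove (X : ℕ → Ω → ℝ) (β : ℝ) (t : ℕ) : Set Ω :=
  {ω | ∀ s < t, β ≤ X s ω}

variable {X : ℕ → Ω → ℝ} {β : ℝ}

@[simp]
theorem stayedAbove_zero : stayedAbove X β 0 = Set.univ := by
  simp [stayedAbove]

theorem stayedAbove_succ (t : ℕ) :
    stayedAbove X β (t + 1) = stayedAbove X β t ∩ {ω | β ≤ X t ω} := by
  ext ω
  exact Nat.forall_lt_succ_right

theorem Adapted.measurableSet_stayedAbove_succ {ℱ : Filtration ℕ m0} (hX : Adapted ℱ X)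
    (t : ℕ) : MeasurableSet[ℱ t] (stayedAbove X β (t + 1)) := by
  have : stayedAbove X β (t + 1) = ⋂ s ∈ Finset.range (t + 1), {ω | β ≤ X s ω} := by
    ext ω; simp [stayedAbove]
  rw [this]
  exact .biInter (Set.to_countable _) fun s hs =>
    ℱ.mono (Nat.lt_succ_iff.mp (Finset.mem_range.mp hs)) _ (hX s measurableSet_Ici)

variable {P : Measure Ω} [IsFiniteMeasure P] {ℱ : Filtration ℕ m0} {c : ℝ}

theorem setIntegral_stayedAbove_le_pow_mul (hX : Adapted ℱ X)
    (hint : ∀ t, Integrable (X t) P) (hnonneg : ∀ t, 0 ≤ᵐ[P] X t) (hc : 0 ≤ c)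
    (hdec : ∀ t, ∀ᵐ ω ∂P, β ≤ X t ω → P[X (t + 1) | ℱ t] ω ≤ c * X t ω) (t : ℕ) :
    ∫ ω in stayedAbove X β t, X t ω ∂P ≤ c ^ t * ∫ ω, X 0 ω ∂P := by
  induction t with
  | zero => simp
  | succ t ih =>
    have hE := hX.measurableSet_stayedAbove_succ (β := β) t
    have hcond : ∀ᵐ ω ∂P.restrict (stayedAbove X β (t + 1)),
        P[X (t + 1) | ℱ t] ω ≤ c * X t ω := by
      rw [ae_restrict_iff' (ℱ.le t _ hE)]
      filter_upwards [hdec t] with ω h hω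
      exact h (stayedAbove_succ t ▸ hω).2
    calc ∫ ω in stayedAbove X β (t + 1), X (t + 1) ω ∂P
        = ∫ ω in stayedAbove X β (t + 1), P[X (t + 1) | ℱ t] ω ∂P :=
          (setIntegral_condExp (ℱ.le t) (hint (t + 1)) hE).symm
      _ ≤ ∫ ω in stayedAbove X β (t + 1), c * X t ω ∂P :=
          setIntegral_mono_ae_restrict integrable_condExp.integrableOn
            ((hint t).const_mul c).integrableOn hcond
      _ ≤ ∫ ω in stayedAbove X β t, c * X t ω ∂P := by
          refine setIntegral_mono_set ((hint t).const_mul c).integrableOn ?_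
            (stayedAbove_succ t ▸ Set.inter_subset_left).eventuallyLE
          filter_upwards [ae_restrict_of_ae (hnonneg t)] with ω hω
          exact mul_nonneg hc hω
      _ = c * ∫ ω in stayedAbove X β t, X t ω ∂P := integral_const_mul _ _
      _ ≤ c ^ (t + 1) * ∫ ω, X 0 ω ∂P := by
          rw [pow_succ', mul_assoc]; exact mul_le_mul_of_nonneg_left ih hc

theorem mul_measureReal_stayedAbove_succ_le (hX : Adapted ℱ X)
    (hint : ∀ t, Integrable (X t) P) (hnonneg : ∀ t, 0 ≤ᵐ[P] X t) (hc : 0 ≤ c)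
    (hdec : ∀ t, ∀ᵐ ω ∂P, β ≤ X t ω → P[X (t + 1) | ℱ t] ω ≤ c * X t ω) (t : ℕ) :
    β * P.real (stayedAbove X β (t + 1)) ≤ c ^ t * ∫ ω, X 0 ω ∂P := by
  have hE := ℱ.le t _ (hX.measurableSet_stayedAbove_succ (β := β) t)
  calc β * P.real (stayedAbove X β (t + 1))
      = ∫ _ in stayedAbove X β (t + 1), β ∂P := by
        rw [setIntegral_const, smul_eq_mul, mul_comm]
    _ ≤ ∫ ω in stayedAbove X β (t + 1), X t ω ∂P :=
        setIntegral_mono_on (integrableOn_const (measure_ne_top P _)) (hint t).integrableOn hE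
          fun ω hω => (stayedAbove_succ t ▸ hω).2
    _ ≤ ∫ ω in stayedAbove X β t, X t ω ∂P :=
        setIntegral_mono_set (hint t).integrableOn (ae_restrict_of_ae (hnonneg t))
          (stayedAbove_succ t ▸ Set.inter_subset_left).eventuallyLE
    _ ≤ c ^ t * ∫ ω, X 0 ω ∂P :=
        setIntegral_stayedAbove_le_pow_mul hX hint hnonneg hc hdec t

end MeasureTheory

open Real in
theorem one_sub_pow_mul_le_half {γ r : ℝ} {T : ℕ} (hγ : γ < 1) (hr : 1 ≤ r)
    (hT : 1 + log r ≤ γ * (T + 1)) : (1 - γ) ^ T * r ≤ 1 / 2 := by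
  have hlog : 0 ≤ log r := log_nonneg hr
  obtain ⟨k, rfl⟩ : ∃ k, T = k + 1 := Nat.exists_eq_succ_of_ne_zero <| by
    rintro rfl; norm_num at hT; linarith
  have hpow : (1 - γ) ^ k ≤ exp (-γ * k) := by
    rw [mul_comm, exp_nat_mul]
    exact pow_le_pow_left₀ (by linarith) (by linarith [add_one_le_exp (-γ)]) k
  have hpeak : (1 - γ) * exp (2 * γ - 1) ≤ 1 / 2 := by
    have h := add_one_le_exp (1 - 2 * γ)
    have h' : exp (1 - 2 * γ) * exp (2 * γ - 1) = 1 := by rw [← exp_add]; norm_num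
    nlinarith [exp_pos (2 * γ - 1)]
  push_cast at hT
  calc (1 - γ) ^ (k + 1) * r = (1 - γ) * ((1 - γ) ^ k * exp (log r)) := by
        rw [exp_log (by linarith), pow_succ]; ring
    _ ≤ (1 - γ) * (exp (-γ * k) * exp (log r)) := by gcongr
    _ ≤ (1 - γ) * exp (2 * γ - 1) := by
        rw [← exp_add]; gcongr; nlinarith
    _ ≤ 1 / 2 := hpeak

/-- Lemma 9 of the paper: a nonnegative stochastic process that decreases in conditional
expectation by a factor `1-γ` as long as it is at least `β` falls below `β` within
`(1/γ)·(1 + ln(x₀/β))` steps with probability at least `1/2`. The event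
`τ ≥ (1/γ)·(1 + ln(x₀/β))` for the stopping time `τ = min{t : X_t ≤ β}` is expressed
equivalently as: `X t ω > β` for all `t` below that bound. -/
theorem stopping_time_bound {Ω : Type*} {m0 : MeasurableSpace Ω}
    (P : Measure Ω) [IsProbabilityMeasure P]
    (ℱ : Filtration ℕ m0)
    (X : ℕ → Ω → ℝ)
    (hadapted : Adapted ℱ X)
    (hint : ∀ t : ℕ, Integrable (X t) P)
    (hnonneg : ∀ t : ℕ, ∀ ω : Ω, 0 ≤ X t ω)
    (x₀ β γ : ℝ)
    (hX0 : X 0 = fun _ => x₀)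
    (hγ0 : 0 < γ) (hγ1 : γ < 1)
    (hβ : 0 < β) (hx₀β : β ≤ x₀)
    (hdec : ∀ t : ℕ, 1 ≤ t →
      ∀ᵐ ω ∂P, β ≤ X (t - 1) ω → (P[X t | ℱ (t - 1)]) ω ≤ (1 - γ) * X (t - 1) ω) :
    P {ω : Ω | ∀ t : ℕ, (t : ℝ) < (1 / γ) * (1 + Real.log (x₀ / β)) → β < X t ω} ≤ 1 / 2 := by
  set B := 1 / γ * (1 + Real.log (x₀ / β))
  have hr : 1 ≤ x₀ / β := (one_le_div hβ).mpr hx₀β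
  have hB : 0 < B := by have := Real.log_nonneg hr; positivity
  obtain ⟨T, hT⟩ : ∃ T, ⌈B⌉₊ = T + 1 :=
    Nat.exists_eq_succ_of_ne_zero (Nat.ceil_pos.mpr hB).ne'
  have hsub : {ω | ∀ t : ℕ, (t : ℝ) < B → β < X t ω} ⊆ stayedAbove X β (T + 1) :=
    fun ω hω s hs => (hω s (Nat.lt_ceil.mp (hT ▸ hs))).le
  have hmarkov : β * P.real (stayedAbove X β (T + 1)) ≤ (1 - γ) ^ T * x₀ := by
    simpa [hX0] using mul_measureReal_stayedAbove_succ_le hadapted hint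
      (fun t => .of_forall (hnonneg t)) (sub_nonneg.mpr hγ1.le)
      (fun t => by simpa using hdec (t + 1) (Nat.le_add_left 1 t)) T
  have hnum : (1 - γ) ^ T * (x₀ / β) ≤ 1 / 2 := by
    refine one_sub_pow_mul_le_half hγ1 hr ?_
    calc 1 + Real.log (x₀ / β) = γ * B := by simp only [B]; field_simp
      _ ≤ γ * (T + 1) := by
        exact_mod_cast hT ▸ mul_le_mul_of_nonneg_left (Nat.le_ceil B) hγ0.le
  have hreal : P.real (stayedAbove X β (T + 1)) ≤ 1 / 2 := by
    rw [mul_div_assoc', div_le_iff₀ hβ] at hnum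
    exact (mul_le_mul_iff_right₀ hβ).mp (by linarith)
  calc P {ω | ∀ t : ℕ, (t : ℝ) < B → β < X t ω}
      ≤ P (stayedAbove X β (T + 1)) := measure_mono hsub
    _ ≤ ENNReal.ofReal (1 / 2) :=
        (ENNReal.le_ofReal_iff_toReal_le (measure_ne_top _ _) (by norm_num)).mpr hreal
    _ = 1 / 2 := by rw [ENNReal.ofReal_div_of_pos two_pos]; simp
end

section
/- Let x > T ≥ 0 be integers, let α ∈ (0,1), let C ≥ 1 and let n ≥ 2 be an integer. Let Z be a binomially distributed random variable with parameters x and p = α·(x−T)/x (so E[Z] = α(x−T)). Then P( Z ≥ (x−T) + C·ln(n) ) ≤ n^{−C·(1−α)/6}. -/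
/-!
Chernoff's bound with `e^t = 1/α`. For `Z ~ Bin(x, p)` the moment generating function satisfies
`E[e^{tZ}] = (1 + p(e^t - 1))^x ≤ exp(x p (e^t - 1))`, and with `x p = α(x - T)` and `e^t = 1/α`
the exponent is exactly `(x - T)(1 - α)`. Since `t = -ln α ≥ 1 - α`, the factor `e^{-t a}` at
`a = (x - T) + C ln n` cancels this and leaves `n^{-C(1-α)}`, which is even stronger than claimed.
-/

open MeasureTheory Real

theorem measure_ge_le_tsum_mul_exp {Ω : Type*} [MeasurableSpace Ω] (μ : Measure Ω)
    (Z : Ω → ℕ) {t : ℝ} (ht : 0 ≤ t) (a : ℝ) :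
    μ {ω | a ≤ Z ω} ≤ ∑' z : ℕ, μ {ω | Z ω = z} * ENNReal.ofReal (exp (t * (z - a))) := by
  have hcover : {ω | a ≤ (Z ω : ℝ)} ⊆ ⋃ z : ℕ, {ω | Z ω = z ∧ a ≤ (z : ℝ)} :=
    fun ω hω => Set.mem_iUnion.mpr ⟨Z ω, rfl, hω⟩
  refine (measure_mono hcover).trans ((measure_iUnion_le _).trans (ENNReal.tsum_le_tsum ?_))
  intro z
  by_cases hz : a ≤ (z : ℝ)
  · have hone : 1 ≤ ENNReal.ofReal (exp (t * (z - a))) := by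
      rw [← ENNReal.ofReal_one]
      exact ENNReal.ofReal_le_ofReal (one_le_exp (mul_nonneg ht (sub_nonneg.mpr hz)))
    calc μ {ω | Z ω = z ∧ a ≤ (z : ℝ)} = μ {ω | Z ω = z} * 1 := by simp [hz]
      _ ≤ _ := by gcongr
  · simp [hz]

theorem binomial_measure_ge_le_exp {Ω : Type*} [MeasurableSpace Ω] (μ : Measure Ω) (Z : Ω → ℕ)
    {x : ℕ} {p : ℝ} (hp0 : 0 ≤ p) (hp1 : p ≤ 1)
    (hZ : ∀ z : ℕ, μ {ω | Z ω = z} =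
      ENNReal.ofReal ((x.choose z : ℝ) * p ^ z * (1 - p) ^ (x - z)))
    {t : ℝ} (ht : 0 ≤ t) (a : ℝ) :
    μ {ω | a ≤ Z ω} ≤ ENNReal.ofReal (exp (x * p * (exp t - 1) - t * a)) := by
  have hpmf_nonneg : ∀ z, 0 ≤ (x.choose z : ℝ) * p ^ z * (1 - p) ^ (x - z) := fun z => by
    have : 0 ≤ 1 - p := sub_nonneg.mpr hp1
    positivity
  set b : ℕ → ℝ := fun z => (x.choose z : ℝ) * p ^ z * (1 - p) ^ (x - z) * exp (t * (z - a))
  have hb_nonneg : ∀ z, 0 ≤ b z := fun z => mul_nonneg (hpmf_nonneg z) (exp_pos _).le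
  have hb_out : ∀ z ∉ Finset.range (x + 1), ENNReal.ofReal (b z) = 0 := fun z hz => by
    simp [b, Nat.choose_eq_zero_of_lt (by simpa using hz : x < z)]
  have hmgf : ∑ z ∈ Finset.range (x + 1), b z = exp (-(t * a)) * (p * exp t + (1 - p)) ^ x := by
    rw [add_pow, Finset.mul_sum]
    refine Finset.sum_congr rfl fun z _ => ?_
    have : exp (t * (z - a)) = exp t ^ z * exp (-(t * a)) := by
      rw [← exp_nat_mul, ← exp_add]; ring_nf
    simp only [b, this, mul_pow]
    ring
  have hbase : (p * exp t + (1 - p)) ^ x ≤ exp (x * p * (exp t - 1)) := by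
    calc (p * exp t + (1 - p)) ^ x ≤ exp (p * (exp t - 1)) ^ x := by
          refine pow_le_pow_left₀ (by nlinarith [exp_pos t]) ?_ x
          linarith [add_one_le_exp (p * (exp t - 1))]
      _ = exp (x * p * (exp t - 1)) := by rw [← exp_nat_mul]; ring_nf
  calc μ {ω | a ≤ Z ω} ≤ ∑' z : ℕ, ENNReal.ofReal (b z) := by
        simpa only [hZ, ← ENNReal.ofReal_mul (hpmf_nonneg _), b]
          using measure_ge_le_tsum_mul_exp μ Z ht a
    _ = ENNReal.ofReal (exp (-(t * a)) * (p * exp t + (1 - p)) ^ x) := by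
        rw [tsum_eq_sum hb_out, ← ENNReal.ofReal_sum_of_nonneg fun z _ => hb_nonneg z, hmgf]
    _ ≤ ENNReal.ofReal (exp (x * p * (exp t - 1) - t * a)) := by
        gcongr
        calc exp (-(t * a)) * (p * exp t + (1 - p)) ^ x
            ≤ exp (-(t * a)) * exp (x * p * (exp t - 1)) := by gcongr
          _ = _ := by rw [← exp_add]; ring_nf

theorem excess_walk_tail_general (x T : ℕ) (hT : T < x)
    (α : ℝ) (hα0 : 0 < α) (hα1 : α < 1)
    (C : ℝ) (hC : 1 ≤ C)
    (n : ℕ) (hn : 2 ≤ n)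
    {Ω : Type*} [MeasurableSpace Ω] (P : Measure Ω)
    (Z : Ω → ℕ)
    (hZ : ∀ z : ℕ, P {ω | Z ω = z} =
      ENNReal.ofReal ((x.choose z : ℝ) * (α * ((x : ℝ) - T) / x) ^ z *
        (1 - α * ((x : ℝ) - T) / x) ^ (x - z))) :
    P {ω | ((x : ℝ) - T) + C * Real.log n ≤ (Z ω : ℝ)} ≤
      ENNReal.ofReal ((n : ℝ) ^ (-(C * (1 - α) / 6))) := by
  have hx : (0 : ℝ) < x := by exact_mod_cast (Nat.zero_le T).trans_lt hT
  have hxT : (0 : ℝ) < x - T := sub_pos.mpr (by exact_mod_cast hT)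
  have hlogn : 0 < log n := log_pos (by exact_mod_cast hn)
  have hp1 : α * ((x : ℝ) - T) / x ≤ 1 := by
    rw [div_le_one hx]; nlinarith
  refine (binomial_measure_ge_le_exp P Z (by positivity) hp1 hZ
    (neg_nonneg.mpr (log_nonpos hα0.le hα1.le)) _).trans (ENNReal.ofReal_le_ofReal ?_)
  have hlogα : log α ≤ α - 1 := log_le_sub_one_of_pos hα0
  have hmean : x * (α * ((x : ℝ) - T) / x) * (exp (-log α) - 1) = (x - T) * (1 - α) := by
    rw [exp_neg, exp_log hα0]; field_simp
  rw [hmean, rpow_def_of_pos (by positivity), exp_le_exp]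
  nlinarith [mul_le_mul_of_nonneg_left hlogα (by positivity : 0 ≤ (x - T : ℝ) + C * log n),
    mul_pos (mul_pos (by linarith : (0 : ℝ) < C) (sub_pos.mpr hα1)) hlogn]

/-- Tail bound for the number of migrating users on one resource (Lemma 7 of the paper):
if `Z ~ Bin(x, α(x−T)/x)`, then `P(Z ≥ (x−T) + C·ln n) ≤ n^{−C(1−α)/6}`.
The binomial distribution of `Z` is specified by its probability mass function. -/
theorem excess_walk_tail (x T : ℕ) (hT : T < x)
    (α : ℝ) (hα0 : 0 < α) (hα1 : α < 1)
    (C : ℝ) (hC : 1 ≤ C)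
    (n : ℕ) (hn : 2 ≤ n)
    {Ω : Type*} [MeasurableSpace Ω] (P : Measure Ω) [IsProbabilityMeasure P]
    (Z : Ω → ℕ) (hZmeas : Measurable Z)
    (hZ : ∀ z : ℕ, P {ω | Z ω = z} =
      ENNReal.ofReal ((x.choose z : ℝ) * (α * ((x : ℝ) - T) / x) ^ z *
        (1 - α * ((x : ℝ) - T) / x) ^ (x - z))) :
    P {ω | ((x : ℝ) - T) + C * Real.log n ≤ (Z ω : ℝ)} ≤
      ENNReal.ofReal ((n : ℝ) ^ (-(C * (1 - α) / 6))) :=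
  excess_walk_tail_general x T hT α hα0 hα1 C hC n hn P Z hZ
end

section
/- Let n ≥ 8 be an even integer and let G = (V,E) be the graph on vertex set V = V₁ ∪ V₂ with |V₁| = |V₂| = n/2, in which V₁ and V₂ each induce a complete graph (clique) and there are exactly k cross edges between V₁ and V₂ for some integer k with 1 ≤ k ≤ n²/5, distributed evenly: every vertex is incident to at least ⌊k/(n/2)⌋ and at most ⌈k/(n/2)⌉ cross edges. Let u ∈ V₁ be a vertex with exactly ⌊k/(n/2)⌋ cross neighbors, and for an integer t ≥ 1 define the probability that a simple random walk started at u stays within V₁ for t steps as the sum, over all sequences (w₀, w₁, …, w_t) with w₀ = u, each w_i ∈ V₁, and {w_i, w_{i+1}} ∈ E for all i < t, of the products ∏_{i=0}^{t−1} 1/deg(w_i). Then this probability is at least 4^{−24kt/n² − 1/2}. -/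
/-!
Write `W t v` for the weight of the walks of length `t` from `v` that never leave `V₁`,
`d = 1 / deg` and `M = |V₁| - 1`. Since `V₁` is a clique, `W (t+1) v ≥ d v * ∑_{z ∈ V₁ \ {v}} W t z`,
and induction on `t` gives `W t v ≥ M d v ρ^t` whenever `ρ M ≤ ∑_{z ∈ V₁} M d z - 1`
(the step uses `M d v ≤ 1`). A vertex with `c` cross edges has `M d = M / (M + c) ≥ 1 - c / (M + f)`,
where `f = ⌊k / m⌋`, `m = n / 2`, is the least number of cross edges at a vertex of `V₁`; summing,
`ρ = 1 - k / (M (M + f))` is admissible. Finally `4^{-6k/m²} ≤ (1 + 8k/m²)⁻¹ ≤ ρ`, using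
`log 4 > 4/3` and `k ≤ 4m²/5`, and at the start `M d u = M / (M + f) ≥ 1/2`.
-/

open Finset

namespace SimpleGraph

variable {V : Type*} [Fintype V] [DecidableEq V] (G : SimpleGraph V) [DecidableRel G.Adj]
  (s : Finset V) (d : V → ℝ)

noncomputable def confinedWalkWeight (t : ℕ) (v : V) : ℝ :=
  ∑ w : Fin (t + 1) → V,
    if w 0 = v ∧ (∀ i, w i ∈ s) ∧ ∀ i : Fin t, G.Adj (w i.castSucc) (w i.succ)
    then ∏ i : Fin t, d (w i.castSucc) else 0

theorem confinedWalkWeight_zero {v : V} (hv : v ∈ s) : G.confinedWalkWeight s d 0 v = 1 := by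
  rw [confinedWalkWeight, ← (Equiv.funUnique (Fin 1) V).symm.sum_comp]
  simp [ite_and, hv]

theorem confinedWalkWeight_succ (t : ℕ) (v : V) :
    G.confinedWalkWeight s d (t + 1) v =
      if v ∈ s then d v * ∑ z ∈ G.neighborFinset v, G.confinedWalkWeight s d t z else 0 := by
  rw [confinedWalkWeight, ← (Fin.consEquiv fun _ => V).sum_comp, Fintype.sum_prod_type_right]
  simp only [confinedWalkWeight, Fin.consEquiv_apply, Fin.cons_zero, Fin.forall_fin_succ,
    Fin.cons_succ, Fin.castSucc_zero, ← Fin.succ_castSucc, Fin.prod_univ_succ]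
  rw [sum_comm (s := G.neighborFinset v)]
  simp only [ite_and, sum_ite_eq, sum_ite_eq', mem_univ, if_true, mem_neighborFinset]
  split_ifs with hv
  · rw [mul_sum]
    refine sum_congr rfl fun g _ => ?_
    split_ifs <;> simp
  · simp

theorem confinedWalkWeight_nonneg (hd : ∀ v, 0 ≤ d v) (t : ℕ) (v : V) :
    0 ≤ G.confinedWalkWeight s d t v :=
  sum_nonneg fun _ _ => ite_nonneg (prod_nonneg fun _ _ => hd _) le_rfl

variable {G s}

theorem IsClique.degree_eq_card_sub_one_add_card_inter (hs : G.IsClique (s : Set V))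
    {s' : Finset V} (hss' : IsCompl s s') {v : V} (hv : v ∈ s) :
    G.degree v = #s - 1 + #(G.neighborFinset v ∩ s') := by
  have hin : G.neighborFinset v ∩ s = s.erase v := by
    ext z
    simp only [mem_inter, mem_neighborFinset, mem_erase]
    exact ⟨fun ⟨hvz, hz⟩ => ⟨hvz.ne', hz⟩, fun ⟨hzv, hz⟩ => ⟨hs hv hz hzv.symm, hz⟩⟩
  rw [← hss'.compl_eq, ← sdiff_eq_inter_compl, ← card_neighborFinset_eq_degree,
    ← card_inter_add_card_sdiff _ s, hin, card_erase_of_mem hv]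

theorem IsClique.mul_pow_le_confinedWalkWeight (hs : G.IsClique (s : Set V))
    (hd : ∀ v, 0 ≤ d v) {c ρ : ℝ} (hρ : 0 ≤ ρ) (hcd : ∀ v ∈ s, c * d v ≤ 1)
    (hρc : ρ * c ≤ ∑ z ∈ s, c * d z - 1) (t : ℕ) {v : V} (hv : v ∈ s) :
    c * d v * ρ ^ t ≤ G.confinedWalkWeight s d t v := by
  induction t generalizing v with
  | zero => simpa [G.confinedWalkWeight_zero s d hv] using hcd v hv
  | succ t ih =>
    have hnbr : s.erase v ⊆ G.neighborFinset v := fun z hz => by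
      obtain ⟨hzv, hz⟩ := mem_erase.1 hz
      exact (G.mem_neighborFinset v z).2 (hs hv hz hzv.symm)
    calc c * d v * ρ ^ (t + 1) = d v * (ρ ^ t * (ρ * c)) := by ring
      _ ≤ d v * (ρ ^ t * (∑ z ∈ s, c * d z - c * d v)) := by
        gcongr
        · exact hd v
        · linarith [hcd v hv]
      _ = d v * ∑ z ∈ s.erase v, c * d z * ρ ^ t := by
        rw [← sum_mul, sum_erase_eq_sub hv, mul_comm (ρ ^ t)]
      _ ≤ d v * ∑ z ∈ s.erase v, G.confinedWalkWeight s d t z := by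
        gcongr with z hz
        · exact hd v
        · exact ih (mem_of_mem_erase hz)
      _ ≤ d v * ∑ z ∈ G.neighborFinset v, G.confinedWalkWeight s d t z := by
        gcongr
        · exact hd v
        · exact fun z _ _ => G.confinedWalkWeight_nonneg s d hd t z
      _ = G.confinedWalkWeight s d (t + 1) v := by rw [confinedWalkWeight_succ, if_pos hv]

theorem IsClique.div_add_mul_pow_le_confinedWalkWeight (hs : G.IsClique (s : Set V)) {M f : ℝ}
    (hM : 0 < M) (hsM : (#s : ℝ) = M + 1) {c : V → ℝ}
    (hdeg : ∀ v ∈ s, (G.degree v : ℝ) = M + c v) {k : ℝ} (hk : ∑ v ∈ s, c v = k) (hf : 0 ≤ f)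
    (hfc : ∀ v ∈ s, f ≤ c v) (hρ : 0 ≤ 1 - k / (M * (M + f))) (t : ℕ) {v : V} (hv : v ∈ s) :
    M / (M + c v) * (1 - k / (M * (M + f))) ^ t ≤
      G.confinedWalkWeight s (fun v => (G.degree v : ℝ)⁻¹) t v := by
  have hc : ∀ v ∈ s, 0 ≤ c v := fun v hv => hf.trans (hfc v hv)
  have hstay : ∀ v ∈ s, M * (G.degree v : ℝ)⁻¹ = 1 - c v / (M + c v) := fun v hv => by
    have := hc v hv
    rw [hdeg v hv]
    field_simp
    ring
  have hstay_ge : ∀ v ∈ s, 1 - c v / (M + f) ≤ M * (G.degree v : ℝ)⁻¹ := fun v hv => by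
    rw [hstay v hv]
    have := div_le_div_of_nonneg_left (hc v hv) (by positivity)
      (add_le_add_right (hfc v hv) M)
    linarith
  have hescape : (1 - k / (M * (M + f))) * M ≤ ∑ v ∈ s, M * (G.degree v : ℝ)⁻¹ - 1 := by
    have := sum_le_sum hstay_ge
    rw [sum_sub_distrib, sum_const, nsmul_one, hsM, ← sum_div, hk] at this
    have hMf : 0 < M + f := by positivity
    have : (1 - k / (M * (M + f))) * M = M - k / (M + f) := by
      field_simp
    linarith
  have := hs.mul_pow_le_confinedWalkWeight (fun v => (G.degree v : ℝ)⁻¹)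
    (fun v => by positivity) hρ (fun v hv => by
      have := hc v hv
      rw [hstay v hv]
      exact sub_le_self _ (by positivity)) hescape t hv
  simpa [hdeg v hv, div_eq_mul_inv] using this

end SimpleGraph

theorem one_add_four_thirds_mul_le_four_rpow {x : ℝ} (hx : 0 ≤ x) :
    1 + 4 / 3 * x ≤ (4 : ℝ) ^ x := by
  have hlog : 4 / 3 ≤ Real.log 4 := by
    rw [show (4 : ℝ) = 2 ^ 2 by norm_num, Real.log_pow]
    linarith [Real.log_two_gt_d9]
  calc 1 + 4 / 3 * x ≤ Real.log 4 * x + 1 := by nlinarith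
    _ ≤ Real.exp (Real.log 4 * x) := Real.add_one_le_exp _
    _ = 4 ^ x := (Real.rpow_def_of_pos (by norm_num) x).symm

theorem four_rpow_mul_sub_half (a : ℝ) (t : ℕ) : (4 : ℝ) ^ (a * t - 1 / 2) = (4 ^ a) ^ t / 2 := by
  have hhalf : (4 : ℝ) ^ (-(1 / 2) : ℝ) = 2⁻¹ := by
    rw [Real.rpow_neg (by norm_num), show (4 : ℝ) = 2 ^ (2 : ℝ) by norm_num,
      ← Real.rpow_mul (by norm_num)]
    norm_num
  rw [sub_eq_add_neg, Real.rpow_add (by norm_num), Real.rpow_mul_natCast (by norm_num), hhalf,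
    div_eq_mul_inv]

theorem sq_add_eight_mul_le {m k f : ℝ} (hm : 4 ≤ m) (hkm : 5 * k ≤ 4 * m ^ 2)
    (hkf : k + 1 ≤ m * (f + 1)) : m ^ 2 + 8 * k ≤ 8 * ((m - 1) * (m - 1 + f)) := by
  have hcubic : m * (m ^ 2 + 8 * k) ≤ 8 * (m - 1) * ((m - 1) ^ 2 + k) := by
    nlinarith [mul_nonneg (mul_nonneg (sub_nonneg.2 hm) (sub_nonneg.2 hm)) (sub_nonneg.2 hm)]
  have hquad : (m - 1) ^ 2 + k ≤ m * (m - 1 + f) := by nlinarith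
  have : m * (m ^ 2 + 8 * k) ≤ m * (8 * ((m - 1) * (m - 1 + f))) := by
    nlinarith [mul_le_mul_of_nonneg_left hquad (by linarith : (0 : ℝ) ≤ 8 * (m - 1))]
  exact le_of_mul_le_mul_left this (by linarith)

theorem four_rpow_neg_le_one_sub_div {m k f : ℝ} (hm : 4 ≤ m) (hk : 0 ≤ k)
    (hkm : 5 * k ≤ 4 * m ^ 2) (hkf : k + 1 ≤ m * (f + 1)) :
    (4 : ℝ) ^ (-(6 * k / m ^ 2)) ≤ 1 - k / ((m - 1) * (m - 1 + f)) := by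
  have hm2 : 0 < m ^ 2 := by positivity
  have hx : 0 ≤ 6 * k / m ^ 2 := by positivity
  calc (4 : ℝ) ^ (-(6 * k / m ^ 2)) = ((4 : ℝ) ^ (6 * k / m ^ 2))⁻¹ :=
        Real.rpow_neg (by norm_num) _
    _ ≤ (1 + 4 / 3 * (6 * k / m ^ 2))⁻¹ :=
        inv_anti₀ (by positivity) (one_add_four_thirds_mul_le_four_rpow hx)
    _ = 1 - k / ((m ^ 2 + 8 * k) / 8) := by field_simp; ring
    _ ≤ 1 - k / ((m - 1) * (m - 1 + f)) := by
        gcongr 1 - k / ?_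
        linarith [sq_add_eight_mul_le hm hkm hkf]

theorem two_clique_confinement_general {V : Type*} [Fintype V] [DecidableEq V]
    (n : ℕ) (hn8 : 8 ≤ n) (hneven : Even n)
    (V₁ V₂ : Finset V)
    (hunion : V₁ ∪ V₂ = Finset.univ) (hdisj : Disjoint V₁ V₂)
    (hcard1 : V₁.card = n / 2)
    (G : SimpleGraph V) [DecidableRel G.Adj]
    (hclique1 : ∀ u ∈ V₁, ∀ v ∈ V₁, (G.Adj u v ↔ u ≠ v))
    (k : ℕ) (hk2 : 5 * k ≤ n ^ 2)
    (hkcount : ∑ v ∈ V₁, ((G.neighborFinset v) ∩ V₂).card = k)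
    (heven1 : ∀ v ∈ V₁, k / (n / 2) ≤ ((G.neighborFinset v) ∩ V₂).card ∧
      ((G.neighborFinset v) ∩ V₂).card ≤ (k + n / 2 - 1) / (n / 2))
    (u : V) (hu : u ∈ V₁)
    (hucross : ((G.neighborFinset u) ∩ V₂).card = k / (n / 2))
    (t : ℕ) :
    (4 : ℝ) ^ (-(24 * (k : ℝ) * (t : ℝ) / (n : ℝ) ^ 2) - 1 / 2) ≤
      ∑ w : Fin (t + 1) → V,
        (if w 0 = u ∧ (∀ i : Fin (t + 1), w i ∈ V₁) ∧
            (∀ i : Fin t, G.Adj (w i.castSucc) (w i.succ))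
          then ∏ i : Fin t, ((G.degree (w i.castSucc) : ℝ))⁻¹
          else 0) := by
  obtain ⟨m, rfl⟩ := hneven
  rw [show (m + m) / 2 = m by omega] at hcard1 heven1 hucross
  have hm : (4 : ℝ) ≤ m := by exact_mod_cast (by omega : 4 ≤ m)
  have hclique : G.IsClique (V₁ : Set V) := fun v hv w hw hvw => (hclique1 v hv w hw).2 hvw
  have hdeg : ∀ v ∈ V₁, (G.degree v : ℝ) = (m - 1 : ℝ) + #(G.neighborFinset v ∩ V₂) := by
    intro v hv
    rw [hclique.degree_eq_card_sub_one_add_card_inter ⟨hdisj, codisjoint_iff.2 hunion⟩ hv,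
      hcard1, Nat.cast_add, Nat.cast_pred (by omega)]
  have hkf : (k : ℝ) + 1 ≤ m * (↑(k / m) + 1) := by exact_mod_cast Nat.lt_mul_div_succ k (by omega)
  have hkm : 5 * (k : ℝ) ≤ 4 * m ^ 2 := by exact_mod_cast (by nlinarith : 5 * k ≤ 4 * m ^ 2)
  have hfm : (↑(k / m) : ℝ) + 1 ≤ m := by
    exact_mod_cast (Nat.div_lt_iff_lt_mul (by omega)).2 (by nlinarith : k < m * m)
  have hρ := four_rpow_neg_le_one_sub_div hm k.cast_nonneg hkm hkf
  have hwalk := hclique.div_add_mul_pow_le_confinedWalkWeight (by linarith)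
    (by rw [hcard1]; ring) hdeg (by exact_mod_cast hkcount) (Nat.cast_nonneg (k / m))
    (fun v hv => by exact_mod_cast (heven1 v hv).1) (hρ.trans' (by positivity)) t hu
  rw [hucross] at hwalk
  have hM : (0 : ℝ) < m - 1 := by linarith
  calc (4 : ℝ) ^ (-(24 * (k : ℝ) * (t : ℝ) / ((m + m : ℕ) : ℝ) ^ 2) - 1 / 2 : ℝ)
      = ((4 : ℝ) ^ (-(6 * k / m ^ 2 : ℝ))) ^ t / 2 := by
        rw [← four_rpow_mul_sub_half]
        congr 1
        push_cast
        field_simp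
        ring
    _ ≤ ((m : ℝ) - 1) / (m - 1 + ↑(k / m)) * (1 - k / ((m - 1) * (m - 1 + ↑(k / m)))) ^ t := by
        rw [div_eq_inv_mul]
        refine mul_le_mul ?_ (pow_le_pow_left₀ (by positivity) hρ t) (by positivity) (by positivity)
        rw [le_div_iff₀ (by positivity)]
        linarith
    _ ≤ _ := hwalk

/-- Confinement estimate underlying Theorem 4 of the paper: in the graph made of two
cliques `V₁, V₂` of size `n/2` each, joined by `k` evenly-distributed cross edges
(`1 ≤ k ≤ n²/5`), a random walk started at a vertex `u ∈ V₁` with `⌊k/(n/2)⌋` cross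
neighbors stays inside `V₁` for `t` steps with probability at least
`4^(−24kt/n² − 1/2)`. The probability of staying in `V₁` is written as the sum over
all trajectories `(w₀, …, w_t)` inside `V₁` starting at `u` of the product of the
one-step probabilities `1/deg(w_i)`. -/
theorem two_clique_confinement {V : Type*} [Fintype V] [DecidableEq V]
    (n : ℕ) (hn8 : 8 ≤ n) (hneven : Even n) (hcard : Fintype.card V = n)
    (V₁ V₂ : Finset V)
    (hunion : V₁ ∪ V₂ = Finset.univ) (hdisj : Disjoint V₁ V₂)
    (hcard1 : V₁.card = n / 2) (hcard2 : V₂.card = n / 2)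
    (G : SimpleGraph V) [DecidableRel G.Adj]
    (hclique1 : ∀ u ∈ V₁, ∀ v ∈ V₁, (G.Adj u v ↔ u ≠ v))
    (hclique2 : ∀ u ∈ V₂, ∀ v ∈ V₂, (G.Adj u v ↔ u ≠ v))
    (k : ℕ) (hk1 : 1 ≤ k) (hk2 : 5 * k ≤ n ^ 2)
    (hkcount : ∑ v ∈ V₁, ((G.neighborFinset v) ∩ V₂).card = k)
    (heven1 : ∀ v ∈ V₁, k / (n / 2) ≤ ((G.neighborFinset v) ∩ V₂).card ∧
      ((G.neighborFinset v) ∩ V₂).card ≤ (k + n / 2 - 1) / (n / 2))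
    (heven2 : ∀ v ∈ V₂, k / (n / 2) ≤ ((G.neighborFinset v) ∩ V₁).card ∧
      ((G.neighborFinset v) ∩ V₁).card ≤ (k + n / 2 - 1) / (n / 2))
    (u : V) (hu : u ∈ V₁)
    (hucross : ((G.neighborFinset u) ∩ V₂).card = k / (n / 2))
    (t : ℕ) (ht : 1 ≤ t) :
    (4 : ℝ) ^ (-(24 * (k : ℝ) * (t : ℝ) / (n : ℝ) ^ 2) - 1 / 2) ≤
      ∑ w : Fin (t + 1) → V,
        (if w 0 = u ∧ (∀ i : Fin (t + 1), w i ∈ V₁) ∧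
            (∀ i : Fin t, G.Adj (w i.castSucc) (w i.succ))
          then ∏ i : Fin t, ((G.degree (w i.castSucc) : ℝ))⁻¹
          else 0) :=
  two_clique_confinement_general n hn8 hneven V₁ V₂ hunion hdisj hcard1 G hclique1 k hk2 hkcount
    heven1 u hu hucross t
end
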